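/- arXiv:2206.06140 — 10 statements merged into one kernel-verified Lean document; each statement's English description precedes it below -/
import Mathlib

section
/- There exists a constant c > 0 such that for all a ∈ ℝ^q and b ∈ ℝ, E[ |⟨a, W⟩ − b| · min(B, 1) ] ≥ c (‖a‖ + |b|). -/
/-!
The functional `g (a, b) = E[|⟨a, W⟩ - b| · min(B, 1)]` on `ℝ^q × ℝ` is continuous (dominated
convergence) and positively homogeneous. It vanishes only at `0`: if `g (a, b) = 0` then, since
`min(B, 1) > 0` a.s., `⟨a, W⟩ = b` a.s., so `⟨a, W - μ⟩ = 0` a.s., which the separation hypothesis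
rules out unless `a = 0`, and then `b = 0`. Its minimum on the compact unit sphere is the constant.
-/

open MeasureTheory
open scoped RealInnerProductSpace

theorem exists_pos_mul_norm_le_of_homogeneous {F : Type*} [NormedAddCommGroup F]
    [NormedSpace ℝ F] [ProperSpace F] [Nontrivial F] {f : F → ℝ} (hf : Continuous f)
    (hsmul : ∀ (t : ℝ) (x : F), 0 ≤ t → f (t • x) = t * f x)
    (hpos : ∀ x, x ≠ 0 → 0 < f x) :
    ∃ c > 0, ∀ x, c * ‖x‖ ≤ f x := by
  obtain ⟨x₀, hx₀, hmin⟩ := (isCompact_sphere (0 : F) 1).exists_isMinOn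
    (NormedSpace.sphere_nonempty.2 zero_le_one) hf.continuousOn
  have hx₀ne : x₀ ≠ 0 := ne_zero_of_mem_unit_sphere ⟨x₀, hx₀⟩
  refine ⟨f x₀, hpos x₀ hx₀ne, fun x => ?_⟩
  rcases eq_or_ne x 0 with rfl | hx
  · have hf0 : f 0 = 0 := by simpa using hsmul 0 0 le_rfl
    simp [hf0]
  · have hu : ‖x‖⁻¹ • x ∈ Metric.sphere (0 : F) 1 := by simp [norm_smul, hx]
    calc f x₀ * ‖x‖ ≤ f (‖x‖⁻¹ • x) * ‖x‖ := by gcongr; exact hmin hu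
      _ = f x := by
        rw [hsmul _ _ (by positivity)]
        field_simp [norm_ne_zero_iff.2 hx]

section WeightedAbsDev

variable {Ω E : Type*} [MeasurableSpace Ω] [NormedAddCommGroup E] [InnerProductSpace ℝ E]
  {P : Measure Ω} {W : Ω → E} {m : Ω → ℝ}

theorem abs_inner_sub_le_norm_mul (p : E × ℝ) (w : E) :
    |⟪p.1, w⟫ - p.2| ≤ ‖p‖ * (‖w‖ + 1) :=
  calc |⟪p.1, w⟫ - p.2| ≤ |⟪p.1, w⟫| + |p.2| := abs_sub _ _
    _ ≤ ‖p.1‖ * ‖w‖ + ‖p.2‖ := add_le_add (abs_real_inner_le_norm _ _) (Real.norm_eq_abs _).ge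
    _ ≤ ‖p‖ * ‖w‖ + ‖p‖ := by gcongr; exacts [norm_fst_le p, norm_snd_le p]
    _ = ‖p‖ * (‖w‖ + 1) := by ring

noncomputable def weightedAbsDev (P : Measure Ω) (W : Ω → E) (m : Ω → ℝ) (p : E × ℝ) : ℝ :=
  ∫ ω, |⟪p.1, W ω⟫ - p.2| * m ω ∂P

theorem integrable_abs_inner_sub_mul [IsFiniteMeasure P] {C : ℝ} (hW : Integrable W P)
    (hm : AEStronglyMeasurable m P) (hmC : ∀ᵐ ω ∂P, |m ω| ≤ C) (p : E × ℝ) :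
    Integrable (fun ω => |⟪p.1, W ω⟫ - p.2| * m ω) P :=
  ((hW.const_inner p.1).sub (integrable_const p.2)).abs.mul_bdd hm
    (by simpa only [Real.norm_eq_abs] using hmC)

theorem continuous_weightedAbsDev [IsFiniteMeasure P] {C : ℝ} (hW : Integrable W P)
    (hm : AEStronglyMeasurable m P) (hmC : ∀ᵐ ω ∂P, |m ω| ≤ C) :
    Continuous (weightedAbsDev P W m) := by
  refine continuous_iff_continuousAt.2 fun p₀ => continuousAt_of_dominated
    (bound := fun ω => (‖p₀‖ + 1) * (‖W ω‖ + 1) * C) ?_ ?_ ?_ ?_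
  · exact .of_forall fun p => (integrable_abs_inner_sub_mul hW hm hmC p).aestronglyMeasurable
  · filter_upwards [Metric.ball_mem_nhds p₀ one_pos] with p hp
    filter_upwards [hmC] with ω hω
    have hC : 0 ≤ C := (abs_nonneg _).trans hω
    rw [norm_mul, Real.norm_eq_abs, abs_abs, Real.norm_eq_abs]
    calc |⟪p.1, W ω⟫ - p.2| * |m ω| ≤ ‖p‖ * (‖W ω‖ + 1) * C :=
          mul_le_mul (abs_inner_sub_le_norm_mul _ _) hω (abs_nonneg _) (by positivity)
      _ ≤ (‖p₀‖ + 1) * (‖W ω‖ + 1) * C := by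
          gcongr; exact (norm_lt_of_mem_ball hp).le
  · exact ((hW.norm.add (integrable_const 1)).const_mul _).mul_const _
  · exact .of_forall fun ω => by fun_prop

theorem weightedAbsDev_smul {t : ℝ} (ht : 0 ≤ t) (p : E × ℝ) :
    weightedAbsDev P W m (t • p) = t * weightedAbsDev P W m p := by
  rw [weightedAbsDev, weightedAbsDev, ← integral_const_mul]
  congr 1 with ω
  rw [Prod.smul_fst, Prod.smul_snd, real_inner_smul_left, smul_eq_mul, ← mul_sub, abs_mul,
    abs_of_nonneg ht, mul_assoc]

theorem weightedAbsDev_pos [NeZero P] {p : E × ℝ}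
    (hint : Integrable (fun ω => |⟪p.1, W ω⟫ - p.2| * m ω) P) (hm0 : ∀ᵐ ω ∂P, 0 < m ω)
    (hnondeg : ∀ a b, (∀ᵐ ω ∂P, ⟪a, W ω⟫ = b) → a = 0) (hp : p ≠ 0) :
    0 < weightedAbsDev P W m p := by
  have hnn : 0 ≤ᵐ[P] fun ω => |⟪p.1, W ω⟫ - p.2| * m ω := by
    filter_upwards [hm0] with ω h using mul_nonneg (abs_nonneg _) h.le
  refine (integral_nonneg_of_ae hnn).lt_of_ne' fun h0 => hp ?_
  have hae : ∀ᵐ ω ∂P, ⟪p.1, W ω⟫ = p.2 := by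
    filter_upwards [(integral_eq_zero_iff_of_nonneg_ae hnn hint).1 h0, hm0] with ω h hω
    simpa [hω.ne', sub_eq_zero] using h
  have h1 : p.1 = 0 := hnondeg _ _ hae
  obtain ⟨ω, hω⟩ := hae.exists
  exact Prod.ext h1 (by simpa [h1] using hω.symm)

theorem eq_zero_of_ae_inner_eq [CompleteSpace E] [IsProbabilityMeasure P] (hW : Integrable W P)
    {μ : E} (hμ : μ = ∫ ω, W ω ∂P) {η : ℝ} (hη : 0 < η)
    (hsep : ∀ u : E, ‖u‖ = 1 → η ≤ ∫ ω, |⟪u, W ω - μ⟫| ∂P)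
    {a : E} {b : ℝ} (h : ∀ᵐ ω ∂P, ⟪a, W ω⟫ = b) : a = 0 := by
  by_contra ha
  have hmean : ⟪a, μ⟫ = b := by
    rw [hμ, ← integral_inner hW, integral_congr_ae h, integral_const]
    simp
  have hzero : ∫ ω, |⟪‖a‖⁻¹ • a, W ω - μ⟫| ∂P = 0 := by
    refine integral_eq_zero_of_ae ?_
    filter_upwards [h] with ω hω
    simp [real_inner_smul_left, inner_sub_right, hω, hmean]
  have hunit : ‖‖a‖⁻¹ • a‖ = 1 := by
    rw [norm_smul, norm_inv, norm_norm, inv_mul_cancel₀ (norm_ne_zero_iff.2 ha)]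
  linarith [hsep _ hunit]

end WeightedAbsDev

theorem exists_pos_lower_bound_expectation_abs_inner_sub_mul_min_general
    (q : ℕ) {Ω : Type*} [MeasurableSpace Ω]
    (P : Measure Ω) [IsProbabilityMeasure P]
    (W : Ω → EuclideanSpace ℝ (Fin q)) (B : Ω → ℝ)
    (hBmeas : Measurable B)
    (hWint : Integrable W P)
    (hBpos : ∀ᵐ ω ∂P, 0 < B ω)
    (μ : EuclideanSpace ℝ (Fin q)) (hμ : μ = ∫ ω, W ω ∂P)
    (η : ℝ) (hη : 0 < η)
    (hsep : ∀ u : EuclideanSpace ℝ (Fin q), ‖u‖ = 1 → η ≤ ∫ ω, |⟪u, W ω - μ⟫| ∂P) :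
    ∃ c > 0, ∀ (a : EuclideanSpace ℝ (Fin q)) (b : ℝ),
      c * (‖a‖ + |b|) ≤ ∫ ω, |⟪a, W ω⟫ - b| * min (B ω) 1 ∂P := by
  set m : Ω → ℝ := fun ω => min (B ω) 1
  have hm : AEStronglyMeasurable m P := (hBmeas.min measurable_const).aestronglyMeasurable
  have hm0 : ∀ᵐ ω ∂P, 0 < m ω := by
    filter_upwards [hBpos] with ω h using lt_min h one_pos
  have hm1 : ∀ᵐ ω ∂P, |m ω| ≤ 1 := by
    filter_upwards [hm0] with ω h using (abs_of_pos h).trans_le (min_le_right _ _)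
  obtain ⟨c, hc, hle⟩ := exists_pos_mul_norm_le_of_homogeneous
    (continuous_weightedAbsDev hWint hm hm1) (fun _ p ht => weightedAbsDev_smul ht p)
    fun p => weightedAbsDev_pos (integrable_abs_inner_sub_mul hWint hm hm1 p) hm0
      fun _ _ => eq_zero_of_ae_inner_eq hWint hμ hη hsep
  refine ⟨c / 2, by positivity, fun a b => ?_⟩
  have hnorm : ‖a‖ + |b| ≤ 2 * ‖(a, b)‖ := by
    rw [← Real.norm_eq_abs]
    linarith [norm_fst_le (a, b), norm_snd_le (a, b)]
  calc c / 2 * (‖a‖ + |b|) ≤ c * ‖(a, b)‖ := by nlinarith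
    _ ≤ _ := hle (a, b)

/-- Let `(W, B)` be jointly distributed with `W : Ω → ℝ^q` integrable with mean `μ`,
`B : Ω → ℝ` with `P(B > 0) = 1`, and suppose `E|⟨u, W − μ⟩| ≥ η > 0` for every unit
vector `u`.  Then there is `c > 0` with
`E[|⟨a, W⟩ − b| · min(B, 1)] ≥ c (‖a‖ + |b|)` for all `a ∈ ℝ^q`, `b ∈ ℝ`. -/
theorem exists_pos_lower_bound_expectation_abs_inner_sub_mul_min
    (q : ℕ) (hq : 1 ≤ q) {Ω : Type*} [MeasurableSpace Ω]
    (P : Measure Ω) [IsProbabilityMeasure P]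
    (W : Ω → EuclideanSpace ℝ (Fin q)) (B : Ω → ℝ)
    (hWmeas : Measurable W) (hBmeas : Measurable B)
    (hWint : Integrable W P)
    (hBpos : ∀ᵐ ω ∂P, 0 < B ω)
    (μ : EuclideanSpace ℝ (Fin q)) (hμ : μ = ∫ ω, W ω ∂P)
    (η : ℝ) (hη : 0 < η)
    (hsep : ∀ u : EuclideanSpace ℝ (Fin q), ‖u‖ = 1 → η ≤ ∫ ω, |⟪u, W ω - μ⟫| ∂P) :
    ∃ c > 0, ∀ (a : EuclideanSpace ℝ (Fin q)) (b : ℝ),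
      c * (‖a‖ + |b|) ≤ ∫ ω, |⟪a, W ω⟫ - b| * min (B ω) 1 ∂P :=
  exists_pos_lower_bound_expectation_abs_inner_sub_mul_min_general q P W B hBmeas hWint hBpos μ hμ η
    hη hsep
end

section
/- There exists a constant c > 0 such that for all a ∈ ℝ^q and b ∈ ℝ, E|⟨a, W⟩ + b| ≥ c (‖a‖ + |b|); explicitly, one may take c = (1/2)·min(η/2, 1) when μ = 0, and c = (1/2)·min(1/2, η/(4‖μ‖))·min(1, 2‖μ‖) when μ ≠ 0. -/
/-!
Write `e = E|⟨a, W⟩ + b|`. Jensen gives `|⟨a, μ⟩ + b| ≤ e`, and the triangle inequality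
`|⟨a, W − μ⟩| ≤ |⟨a, W⟩ + b| + |⟨a, μ⟩ + b|` then turns the separation hypothesis into
`η ‖a‖ ≤ 2 e`. Cauchy–Schwarz bounds `|b|` by `e + ‖μ‖ ‖a‖ ≤ (1 + 2‖μ‖/η) e`, so any constant
`K` with `K ≤ η / 2` and `K (η + 2‖μ‖) ≤ η` yields `(K / 2)(‖a‖ + |b|) ≤ e`.
-/

open MeasureTheory
open scoped RealInnerProductSpace

theorem half_mul_mul_add_le {η m K s B e : ℝ} (hη : 0 < η) (hm : 0 ≤ m) (hK : 0 ≤ K)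
    (hKη : K ≤ η / 2) (hKm : K * (η + 2 * m) ≤ η) (hs : 0 ≤ s)
    (hse : η * s ≤ 2 * e) (hB : B ≤ e + m * s) :
    1 / 2 * K * (s + B) ≤ e := by
  have he : 0 ≤ e := by nlinarith
  have hKs : K * s ≤ e := by nlinarith
  have hKB : η * (K * B) ≤ η * e := by
    nlinarith [mul_le_mul_of_nonneg_left hB (mul_nonneg hη.le hK),
      mul_le_mul_of_nonneg_left hse (mul_nonneg hK hm),
      mul_le_mul_of_nonneg_right hKm he]
  nlinarith [le_of_mul_le_mul_left hKB hη]

theorem min_mul_min_le_half_and_mul_add_le {η m : ℝ} (hη : 0 < η) (hm : 0 < m) :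
    min (1 / 2) (η / (4 * m)) * min 1 (2 * m) ≤ η / 2 ∧
      min (1 / 2) (η / (4 * m)) * min 1 (2 * m) * (η + 2 * m) ≤ η := by
  set k := min (1 / 2) (η / (4 * m))
  set l := min 1 (2 * m)
  have hk0 : 0 ≤ k := le_min (by norm_num) (by positivity)
  have hl0 : 0 ≤ l := le_min zero_le_one (by positivity)
  have hk : k * (4 * m) ≤ η := (le_div_iff₀ (by positivity)).mp (min_le_right _ _)
  have hkl₁ : k * l ≤ k := mul_le_of_le_one_right hk0 (min_le_left _ _)
  have hkl₂ : k * l ≤ k * (2 * m) := mul_le_mul_of_nonneg_left (min_le_right _ _) hk0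
  have hk₂ : k ≤ 1 / 2 := min_le_left _ _
  constructor <;> nlinarith

section

variable {E : Type*} [NormedAddCommGroup E] [InnerProductSpace ℝ E]
  {Ω : Type*} [MeasurableSpace Ω] {P : Measure Ω}

theorem mul_norm_le_integral_abs_inner {X : Ω → E} {η : ℝ}
    (hsep : ∀ u : E, ‖u‖ = 1 → η ≤ ∫ ω, |⟪u, X ω⟫| ∂P) (a : E) :
    η * ‖a‖ ≤ ∫ ω, |⟪a, X ω⟫| ∂P := by
  rcases eq_or_ne a 0 with rfl | ha
  · simp
  have hscale : ∫ ω, |⟪‖a‖⁻¹ • a, X ω⟫| ∂P = ‖a‖⁻¹ * ∫ ω, |⟪a, X ω⟫| ∂P := by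
    simp only [real_inner_smul_left, abs_mul, abs_inv, abs_norm]
    exact integral_const_mul _ _
  have h := hsep (‖a‖⁻¹ • a) (by
    rw [norm_smul, norm_inv, norm_norm, inv_mul_cancel₀ (norm_ne_zero_iff.mpr ha)])
  rw [hscale, le_inv_mul_iff₀ (norm_pos_iff.mpr ha)] at h
  linarith

variable [CompleteSpace E] [IsProbabilityMeasure P] {W : Ω → E}

theorem abs_inner_integral_add_le_integral_abs (hW : Integrable W P) (a : E) (b : ℝ) :
    |⟪a, ∫ ω, W ω ∂P⟫ + b| ≤ ∫ ω, |⟪a, W ω⟫ + b| ∂P := by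
  have hmean : ∫ ω, (⟪a, W ω⟫ + b) ∂P = ⟪a, ∫ ω, W ω ∂P⟫ + b := by
    rw [integral_add (hW.const_inner a) (integrable_const b), integral_const, probReal_univ,
      one_smul, integral_inner hW]
  rw [← hmean]
  exact abs_integral_le_integral_abs

theorem integral_abs_inner_sub_integral_le (hW : Integrable W P) (a : E) (b : ℝ) :
    ∫ ω, |⟪a, W ω - ∫ ω', W ω' ∂P⟫| ∂P ≤ 2 * ∫ ω, |⟪a, W ω⟫ + b| ∂P := by
  set μ := ∫ ω, W ω ∂P
  have hint : Integrable (fun ω => |⟪a, W ω⟫ + b|) P :=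
    ((hW.const_inner a).add (integrable_const b)).abs
  have hpoint : ∀ ω, |⟪a, W ω - μ⟫| ≤ |⟪a, W ω⟫ + b| + |⟪a, μ⟫ + b| := fun ω => by
    rw [inner_sub_right, show ⟪a, W ω⟫ - ⟪a, μ⟫ = (⟪a, W ω⟫ + b) - (⟪a, μ⟫ + b) by ring]
    exact abs_sub _ _
  calc ∫ ω, |⟪a, W ω - μ⟫| ∂P
      ≤ ∫ ω, (|⟪a, W ω⟫ + b| + |⟪a, μ⟫ + b|) ∂P :=
        integral_mono ((hW.sub (integrable_const μ)).const_inner a).abs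
          (hint.add (integrable_const _)) hpoint
    _ = ∫ ω, |⟪a, W ω⟫ + b| ∂P + |⟪a, μ⟫ + b| := by
        rw [integral_add hint (integrable_const _), integral_const, probReal_univ, one_smul]
    _ ≤ 2 * ∫ ω, |⟪a, W ω⟫ + b| ∂P := by
        linarith [abs_inner_integral_add_le_integral_abs hW a b]

theorem abs_le_integral_abs_inner_add_add_norm_mul_norm (hW : Integrable W P) (a : E) (b : ℝ) :
    |b| ≤ ∫ ω, |⟪a, W ω⟫ + b| ∂P + ‖∫ ω, W ω ∂P‖ * ‖a‖ := by
  have hb : |b| ≤ |⟪a, ∫ ω, W ω ∂P⟫ + b| + |⟪a, ∫ ω, W ω ∂P⟫| := by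
    simpa using abs_sub (⟪a, ∫ ω, W ω ∂P⟫ + b) ⟪a, ∫ ω, W ω ∂P⟫
  linarith [abs_inner_integral_add_le_integral_abs hW a b,
    abs_real_inner_le_norm a (∫ ω, W ω ∂P)]

theorem half_mul_norm_add_abs_le_integral_abs_inner_add (hW : Integrable W P)
    {η : ℝ} (hη : 0 < η)
    (hsep : ∀ u : E, ‖u‖ = 1 → η ≤ ∫ ω, |⟪u, W ω - ∫ ω', W ω' ∂P⟫| ∂P)
    {K : ℝ} (hK : 0 ≤ K) (hKη : K ≤ η / 2) (hKμ : K * (η + 2 * ‖∫ ω, W ω ∂P‖) ≤ η)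
    (a : E) (b : ℝ) :
    1 / 2 * K * (‖a‖ + |b|) ≤ ∫ ω, |⟪a, W ω⟫ + b| ∂P :=
  half_mul_mul_add_le hη (norm_nonneg _) hK hKη hKμ (norm_nonneg a)
    ((mul_norm_le_integral_abs_inner hsep a).trans (integral_abs_inner_sub_integral_le hW a b))
    (abs_le_integral_abs_inner_add_add_norm_mul_norm hW a b)

end

theorem expectation_abs_inner_add_lower_bound_explicit_general
    (q : ℕ) {Ω : Type*} [MeasurableSpace Ω]
    (P : Measure Ω) [IsProbabilityMeasure P]
    (W : Ω → EuclideanSpace ℝ (Fin q))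
    (hWint : Integrable W P)
    (μ : EuclideanSpace ℝ (Fin q)) (hμ : μ = ∫ ω, W ω ∂P)
    (η : ℝ) (hη : 0 < η)
    (hsep : ∀ u : EuclideanSpace ℝ (Fin q), ‖u‖ = 1 → η ≤ ∫ ω, |⟪u, W ω - μ⟫| ∂P) :
    (∃ c > 0, ∀ (a : EuclideanSpace ℝ (Fin q)) (b : ℝ),
        c * (‖a‖ + |b|) ≤ ∫ ω, |⟪a, W ω⟫ + b| ∂P) ∧
    (μ = 0 → ∀ (a : EuclideanSpace ℝ (Fin q)) (b : ℝ),
        (1 / 2) * min (η / 2) 1 * (‖a‖ + |b|) ≤ ∫ ω, |⟪a, W ω⟫ + b| ∂P) ∧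
    (μ ≠ 0 → ∀ (a : EuclideanSpace ℝ (Fin q)) (b : ℝ),
        (1 / 2) * min (1 / 2) (η / (4 * ‖μ‖)) * min 1 (2 * ‖μ‖) * (‖a‖ + |b|)
          ≤ ∫ ω, |⟪a, W ω⟫ + b| ∂P) := by
  subst hμ
  have hzero : ∫ ω, W ω ∂P = 0 → ∀ a b, 1 / 2 * min (η / 2) 1 * (‖a‖ + |b|) ≤
      ∫ ω, |⟪a, W ω⟫ + b| ∂P := fun h0 =>
    half_mul_norm_add_abs_le_integral_abs_inner_add hWint hη hsep (by positivity)
      (min_le_left _ _) (by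
        rw [h0, norm_zero, mul_zero, add_zero]
        exact mul_le_of_le_one_left hη.le (min_le_right _ _))
  have hne : ∫ ω, W ω ∂P ≠ 0 → ∀ a b, 1 / 2 * min (1 / 2) (η / (4 * ‖∫ ω, W ω ∂P‖)) *
      min 1 (2 * ‖∫ ω, W ω ∂P‖) * (‖a‖ + |b|) ≤ ∫ ω, |⟪a, W ω⟫ + b| ∂P := fun h0 => by
    have hm := norm_pos_iff.mpr h0
    obtain ⟨hKη, hKμ⟩ := min_mul_min_le_half_and_mul_add_le hη hm
    simpa only [mul_assoc] using
      half_mul_norm_add_abs_le_integral_abs_inner_add hWint hη hsep (by positivity) hKη hKμ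
  refine ⟨?_, hzero, hne⟩
  by_cases h0 : ∫ ω, W ω ∂P = 0
  · exact ⟨_, by positivity, hzero h0⟩
  · exact ⟨_, by have := norm_pos_iff.mpr h0; positivity, hne h0⟩

/-- Let `W : Ω → ℝ^q` be integrable with mean `μ`, and suppose `E|⟨u, W − μ⟩| ≥ η > 0`
for every unit vector `u`.  Then there is `c > 0` with
`E|⟨a, W⟩ + b| ≥ c (‖a‖ + |b|)` for all `a, b`; explicitly, one may take
`c = (1/2)·min(η/2, 1)` when `μ = 0`, and
`c = (1/2)·min(1/2, η/(4‖μ‖))·min(1, 2‖μ‖)` when `μ ≠ 0`. -/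
theorem expectation_abs_inner_add_lower_bound_explicit
    (q : ℕ) (hq : 1 ≤ q) {Ω : Type*} [MeasurableSpace Ω]
    (P : Measure Ω) [IsProbabilityMeasure P]
    (W : Ω → EuclideanSpace ℝ (Fin q)) (hWmeas : Measurable W)
    (hWint : Integrable W P)
    (μ : EuclideanSpace ℝ (Fin q)) (hμ : μ = ∫ ω, W ω ∂P)
    (η : ℝ) (hη : 0 < η)
    (hsep : ∀ u : EuclideanSpace ℝ (Fin q), ‖u‖ = 1 → η ≤ ∫ ω, |⟪u, W ω - μ⟫| ∂P) :
    (∃ c > 0, ∀ (a : EuclideanSpace ℝ (Fin q)) (b : ℝ),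
        c * (‖a‖ + |b|) ≤ ∫ ω, |⟪a, W ω⟫ + b| ∂P) ∧
    (μ = 0 → ∀ (a : EuclideanSpace ℝ (Fin q)) (b : ℝ),
        (1 / 2) * min (η / 2) 1 * (‖a‖ + |b|) ≤ ∫ ω, |⟪a, W ω⟫ + b| ∂P) ∧
    (μ ≠ 0 → ∀ (a : EuclideanSpace ℝ (Fin q)) (b : ℝ),
        (1 / 2) * min (1 / 2) (η / (4 * ‖μ‖)) * min 1 (2 * ‖μ‖) * (‖a‖ + |b|)
          ≤ ∫ ω, |⟪a, W ω⟫ + b| ∂P) :=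
  expectation_abs_inner_add_lower_bound_explicit_general q P W hWint μ hμ η hη hsep
end

section
/- The set R is geodesically connected in the following chord sense: for all u, v ∈ R and all α ∈ [0, 1], the vector w = αu + (1−α)v is nonzero and w/‖w‖ belongs to R. -/
open scoped RealInnerProductSpace

/-- In the change-plane level-set setting, the set `R = {ω ∈ S^{p−1} : C_R(ω) > 0}` is
geodesically connected in the chord sense: for `u, v ∈ R` and `α ∈ [0,1]`, the vector
`w = αu + (1−α)v` is nonzero and `w/‖w‖ ∈ R`. -/
theorem changePlane_R_geodesically_connected
    (p n : ℕ) (hp : 1 ≤ p)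
    (X : Fin n → EuclideanSpace ℝ (Fin p)) (V : Fin n → ℝ)
    (hV : ∀ i, V i = -1 ∨ V i = 1)
    (ω₁ : EuclideanSpace ℝ (Fin p)) (γ₁ : ℝ) (hω₁ : ‖ω₁‖ = 1)
    (hgen : ∀ i, (0 < ⟪ω₁, X i⟫ - γ₁ → V i = 1) ∧ (⟪ω₁, X i⟫ - γ₁ ≤ 0 → V i = -1))
    (hneg : ∃ j, V j = -1) (hpos : ∃ k, V k = 1)
    (CL CU : EuclideanSpace ℝ (Fin p) → ℝ)
    (hCL : ∀ ω, IsGreatest ((fun i => ⟪ω, X i⟫) '' {i | V i = -1}) (CL ω))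
    (hCU : ∀ ω, IsLeast ((fun i => ⟪ω, X i⟫) '' {i | V i = 1}) (CU ω)) :
    ∀ u ∈ {ω : EuclideanSpace ℝ (Fin p) | ‖ω‖ = 1 ∧ 0 < CU ω - CL ω},
      ∀ v ∈ {ω : EuclideanSpace ℝ (Fin p) | ‖ω‖ = 1 ∧ 0 < CU ω - CL ω},
        ∀ α ∈ Set.Icc (0 : ℝ) 1,
          α • u + (1 - α) • v ≠ 0 ∧
          ‖α • u + (1 - α) • v‖⁻¹ • (α • u + (1 - α) • v)
            ∈ {ω : EuclideanSpace ℝ (Fin p) | ‖ω‖ = 1 ∧ 0 < CU ω - CL ω} := by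
  intro u hu v hv α hα
  obtain ⟨hu1, hu2⟩ := hu
  obtain ⟨hv1, hv2⟩ := hv
  obtain ⟨hα0, hα1⟩ := hα
  set w := α • u + (1 - α) • v with hw
  have hinner : ∀ i, ⟪w, X i⟫ = α * ⟪u, X i⟫ + (1 - α) * ⟪v, X i⟫ := by
    intro i
    show ⟪α • u + (1 - α) • v, X i⟫ = _
    rw [inner_add_left, real_inner_smul_left, real_inner_smul_left]
  -- CL w ≤ α CL u + (1-α) CL v
  have hCLw : CL w ≤ α * CL u + (1 - α) * CL v := by
    obtain ⟨i, hi, hie⟩ := (hCL w).1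
    dsimp only at hie
    rw [← hie, hinner i]
    have h1 : ⟪u, X i⟫ ≤ CL u := (hCL u).2 ⟨i, hi, rfl⟩
    have h2 : ⟪v, X i⟫ ≤ CL v := (hCL v).2 ⟨i, hi, rfl⟩
    have h3 : (0:ℝ) ≤ 1 - α := by linarith
    nlinarith [mul_le_mul_of_nonneg_left h1 hα0, mul_le_mul_of_nonneg_left h2 h3]
  have hCUw : α * CU u + (1 - α) * CU v ≤ CU w := by
    obtain ⟨i, hi, hie⟩ := (hCU w).1
    dsimp only at hie
    rw [← hie, hinner i]
    have h1 : CU u ≤ ⟪u, X i⟫ := (hCU u).2 ⟨i, hi, rfl⟩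
    have h2 : CU v ≤ ⟪v, X i⟫ := (hCU v).2 ⟨i, hi, rfl⟩
    have h3 : (0:ℝ) ≤ 1 - α := by linarith
    nlinarith [mul_le_mul_of_nonneg_left h1 hα0, mul_le_mul_of_nonneg_left h2 h3]
  have hpos' : 0 < α * (CU u - CL u) + (1 - α) * (CU v - CL v) := by
    rcases eq_or_lt_of_le hα0 with h | h
    · rw [← h]; simp; linarith
    · have : 0 ≤ (1 - α) * (CU v - CL v) := by
        apply mul_nonneg <;> linarith
      nlinarith
  have hwpos : 0 < CU w - CL w := by nlinarith
  have hwne : w ≠ 0 := by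
    intro h0
    obtain ⟨i, hi, hie⟩ := (hCL w).1
    obtain ⟨j, hj, hje⟩ := (hCU w).1
    dsimp only at hie hje
    rw [h0] at hie hje hwpos
    simp only [inner_zero_left] at hie hje
    rw [← hie, ← hje] at hwpos
    simp at hwpos
  refine ⟨hwne, ?_, ?_⟩
  · rw [norm_smul]
    simp [norm_ne_zero_iff.mpr hwne]
  · set c := ‖w‖⁻¹ with hc
    have hcpos : 0 < c := by
      rw [hc]
      exact inv_pos.mpr (norm_pos_iff.mpr hwne)
    have hinner2 : ∀ i, ⟪c • w, X i⟫ = c * ⟪w, X i⟫ := fun i => real_inner_smul_left _ _ _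
    have hCLc : CL (c • w) = c * CL w := by
      refine (hCL (c • w)).unique ⟨?_, ?_⟩
      · obtain ⟨i, hi, hie⟩ := (hCL w).1
        dsimp only at hie
        exact ⟨i, hi, by dsimp only; rw [hinner2 i, hie]⟩
      · rintro x ⟨i, hi, rfl⟩
        dsimp only
        rw [hinner2 i]
        exact mul_le_mul_of_nonneg_left ((hCL w).2 ⟨i, hi, rfl⟩) hcpos.le
    have hCUc : CU (c • w) = c * CU w := by
      refine (hCU (c • w)).unique ⟨?_, ?_⟩
      · obtain ⟨i, hi, hie⟩ := (hCU w).1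
        dsimp only at hie
        exact ⟨i, hi, by dsimp only; rw [hinner2 i, hie]⟩
      · rintro x ⟨i, hi, rfl⟩
        dsimp only
        rw [hinner2 i]
        exact mul_le_mul_of_nonneg_left ((hCU w).2 ⟨i, hi, rfl⟩) hcpos.le
    rw [hCLc, hCUc, ← mul_sub]
    exact mul_pos hcpos hwpos
end

section
/- Assume p ≥ 2 and let ν denote the spherical (surface) measure on S^{p−1}. Then the vector v = ∫_R ω C_R(ω) dν(ω) is nonzero; the mean-midpoint direction ω̂ = v/‖v‖ belongs to R; the scalar γ̂ = [C_L(ω̂) + C_U(ω̂)]/2 satisfies γ̂ ∈ [l₀, u₀]; and (ω̂, γ̂) ∈ Φ. -/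
set_option maxHeartbeats 1000000

open MeasureTheory
open scoped RealInnerProductSpace Pointwise

/-- In the change-plane level-set setting with `p ≥ 2` and `ν` the spherical measure on
`S^{p−1}`: the vector `v = ∫_R ω C_R(ω) dν(ω)` is nonzero, the mean-midpoint direction
`ω̂ = v/‖v‖` belongs to `R`, the scalar `γ̂ = (C_L(ω̂) + C_U(ω̂))/2` lies in `[l₀, u₀]`,
and `(ω̂, γ̂) ∈ Φ`. -/
theorem changePlane_meanMidpoint_mem_levelSet
    (p n : ℕ) (hp : 2 ≤ p)
    (X : Fin n → EuclideanSpace ℝ (Fin p)) (V : Fin n → ℝ)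
    (hV : ∀ i, V i = -1 ∨ V i = 1)
    (ω₁ : EuclideanSpace ℝ (Fin p)) (γ₁ : ℝ) (hω₁ : ‖ω₁‖ = 1)
    (hgen : ∀ i, (0 < ⟪ω₁, X i⟫ - γ₁ → V i = 1) ∧ (⟪ω₁, X i⟫ - γ₁ ≤ 0 → V i = -1))
    (hneg : ∃ j, V j = -1) (hpos : ∃ k, V k = 1)
    (CL CU : EuclideanSpace ℝ (Fin p) → ℝ)
    (hCL : ∀ ω, IsGreatest ((fun i => ⟪ω, X i⟫) '' {i | V i = -1}) (CL ω))
    (hCU : ∀ ω, IsLeast ((fun i => ⟪ω, X i⟫) '' {i | V i = 1}) (CU ω))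
    (k₁ ρ : ℝ) (hk₁ : ∀ i, ‖X i‖ ≤ k₁) (hρ : 0 < ρ)
    (l₀ u₀ : ℝ) (hl₀ : l₀ = -k₁ - ρ) (hu₀ : u₀ = k₁ + ρ)
    (ν : Measure (Metric.sphere (0 : EuclideanSpace ℝ (Fin p)) 1))
    (hν : ν = (volume : Measure (EuclideanSpace ℝ (Fin p))).toSphere)
    (v : EuclideanSpace ℝ (Fin p))
    (hv : v = ∫ ω in {ω : Metric.sphere (0 : EuclideanSpace ℝ (Fin p)) 1 |
            0 < CU (ω : EuclideanSpace ℝ (Fin p)) - CL (ω : EuclideanSpace ℝ (Fin p))},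
          (CU (ω : EuclideanSpace ℝ (Fin p)) - CL (ω : EuclideanSpace ℝ (Fin p))) •
            (ω : EuclideanSpace ℝ (Fin p)) ∂ν) :
    v ≠ 0 ∧
    (‖v‖⁻¹ • v ∈ {ω : EuclideanSpace ℝ (Fin p) | ‖ω‖ = 1 ∧ 0 < CU ω - CL ω}) ∧
    (CL (‖v‖⁻¹ • v) + CU (‖v‖⁻¹ • v)) / 2 ∈ Set.Icc l₀ u₀ ∧
    (‖v‖⁻¹ • v, (CL (‖v‖⁻¹ • v) + CU (‖v‖⁻¹ • v)) / 2)
      ∈ {q : EuclideanSpace ℝ (Fin p) × ℝ | ‖q.1‖ = 1 ∧ q.2 ∈ Set.Icc l₀ u₀ ∧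
          ∀ i, (0 < ⟪q.1, X i⟫ - q.2 → V i = 1) ∧ (⟪q.1, X i⟫ - q.2 ≤ 0 → V i = -1)} := by
  classical
  subst hν
  obtain ⟨j₀, hj₀⟩ := hneg
  obtain ⟨k₀, hk₀⟩ := hpos
  have hk₁0 : 0 ≤ k₁ := le_trans (norm_nonneg _) (hk₁ j₀)
  -- positive points are strictly above `γ₁`, negative points at or below it
  have hposγ : ∀ i, V i = 1 → γ₁ < ⟪ω₁, X i⟫ := by
    intro i hi
    by_contra h
    have h2 := (hgen i).2 (by linarith)
    rw [h2] at hi; norm_num at hi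
  have hnegγ : ∀ i, V i = -1 → ⟪ω₁, X i⟫ ≤ γ₁ := by
    intro i hi
    by_contra h
    have h2 := (hgen i).1 (by linarith)
    rw [h2] at hi; norm_num at hi
  have hCU_le : ∀ (ω : EuclideanSpace ℝ (Fin p)) i, V i = 1 → CU ω ≤ ⟪ω, X i⟫ :=
    fun ω i hi => (hCU ω).2 ⟨i, hi, rfl⟩
  have hCL_ge : ∀ (ω : EuclideanSpace ℝ (Fin p)) i, V i = -1 → ⟪ω, X i⟫ ≤ CL ω :=
    fun ω i hi => (hCL ω).2 ⟨i, hi, rfl⟩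
  -- Lipschitz bounds for CU and CL
  have hCUlip : ∀ a b, CU a ≤ CU b + k₁ * ‖a - b‖ := by
    intro a b
    obtain ⟨i, hi, hib⟩ := (hCU b).1
    have hib' : ⟪b, X i⟫ = CU b := hib
    have h1 : CU a ≤ ⟪a, X i⟫ := hCU_le a i hi
    have h2 : ⟪a - b, X i⟫ ≤ k₁ * ‖a - b‖ := by
      calc ⟪a - b, X i⟫ ≤ ‖a - b‖ * ‖X i‖ := real_inner_le_norm _ _
        _ ≤ ‖a - b‖ * k₁ := by
            have := hk₁ i; nlinarith [norm_nonneg (a - b)]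
        _ = k₁ * ‖a - b‖ := mul_comm _ _
    have h3 : ⟪a - b, X i⟫ = ⟪a, X i⟫ - ⟪b, X i⟫ := inner_sub_left _ _ _
    linarith
  have hCLlip : ∀ a b, CL a ≤ CL b + k₁ * ‖a - b‖ := by
    intro a b
    obtain ⟨i, hi, hia⟩ := (hCL a).1
    have hia' : ⟪a, X i⟫ = CL a := hia
    have h1 : ⟪b, X i⟫ ≤ CL b := hCL_ge b i hi
    have h2 : ⟪a - b, X i⟫ ≤ k₁ * ‖a - b‖ := by
      calc ⟪a - b, X i⟫ ≤ ‖a - b‖ * ‖X i‖ := real_inner_le_norm _ _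
        _ ≤ ‖a - b‖ * k₁ := by
            have := hk₁ i; nlinarith [norm_nonneg (a - b)]
        _ = k₁ * ‖a - b‖ := mul_comm _ _
    have h3 : ⟪a - b, X i⟫ = ⟪a, X i⟫ - ⟪b, X i⟫ := inner_sub_left _ _ _
    linarith
  have hCUcont : Continuous CU := by
    refine (LipschitzWith.of_dist_le_mul (K := Real.toNNReal k₁) ?_).continuous
    intro a b
    rw [Real.dist_eq, Real.coe_toNNReal _ hk₁0, dist_eq_norm, abs_sub_le_iff]
    constructor
    · linarith [hCUlip a b]
    · have := hCUlip b a; rw [norm_sub_rev] at this; linarith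
  have hCLcont : Continuous CL := by
    refine (LipschitzWith.of_dist_le_mul (K := Real.toNNReal k₁) ?_).continuous
    intro a b
    rw [Real.dist_eq, Real.coe_toNNReal _ hk₁0, dist_eq_norm, abs_sub_le_iff]
    constructor
    · linarith [hCLlip a b]
    · have := hCLlip b a; rw [norm_sub_rev] at this; linarith
  -- the gap is positive at ω₁
  have hcω₁ : 0 < CU ω₁ - CL ω₁ := by
    obtain ⟨a, ha, haeq⟩ := (hCU ω₁).1
    obtain ⟨b, hb, hbeq⟩ := (hCL ω₁).1
    have haeq' : ⟪ω₁, X a⟫ = CU ω₁ := haeq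
    have hbeq' : ⟪ω₁, X b⟫ = CL ω₁ := hbeq
    have := hposγ a ha
    have := hnegγ b hb
    linarith
  -- the relevant set on the sphere
  set S : Set (Metric.sphere (0 : EuclideanSpace ℝ (Fin p)) 1) :=
    {ω : Metric.sphere (0 : EuclideanSpace ℝ (Fin p)) 1 |
        0 < CU (ω : EuclideanSpace ℝ (Fin p)) - CL (ω : EuclideanSpace ℝ (Fin p))} with hSdef
  have hSopen : IsOpen S :=
    isOpen_lt continuous_const ((hCUcont.sub hCLcont).comp continuous_subtype_val)
  have hSmeas : MeasurableSet S := hSopen.measurableSet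
  -- `S` has positive spherical measure
  have hνS : 0 < (volume : Measure (EuclideanSpace ℝ (Fin p))).toSphere S := by
    set ε := (CU ω₁ - CL ω₁) / (2 * k₁ + 1) with hε
    have hεpos : 0 < ε := div_pos hcω₁ (by linarith)
    have hεeq : (2 * k₁ + 1) * ε = CU ω₁ - CL ω₁ := by
      rw [hε]; field_simp
    set δ := min (ε / 8) 8⁻¹ with hδdef
    have hδpos : 0 < δ := lt_min (by positivity) (by norm_num)
    have hδ8 : δ ≤ 8⁻¹ := min_le_right _ _
    have hδε : δ ≤ ε / 8 := min_le_left _ _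
    have hball : Metric.ball ((2:ℝ)⁻¹ • ω₁) δ ⊆ Set.Ioo (0:ℝ) 1 • ((↑) '' S) := by
      intro x hx
      rw [Metric.mem_ball, dist_eq_norm] at hx
      have hxn : |‖x‖ - 2⁻¹| < δ := by
        have h := abs_norm_sub_norm_le x ((2:ℝ)⁻¹ • ω₁)
        have h2 : ‖(2:ℝ)⁻¹ • ω₁‖ = 2⁻¹ := by
          rw [norm_smul, hω₁]; norm_num
        rw [h2] at h; exact lt_of_le_of_lt h hx
      have habs := abs_lt.1 hxn
      have hxlb : (3:ℝ)/8 < ‖x‖ := by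
        have : -(8:ℝ)⁻¹ ≤ -δ := by linarith
        linarith [habs.1]
      have hxub : ‖x‖ < 1 := by linarith [habs.2]
      have hx0 : x ≠ 0 := norm_pos_iff.1 (by linarith)
      set u := ‖x‖⁻¹ • x with hu
      have hun : ‖u‖ = 1 := norm_smul_inv_norm hx0
      have hdiff : ‖u - ω₁‖ < ε := by
        have h1 : u - ω₁ = ‖x‖⁻¹ • (x - ‖x‖ • ω₁) := by
          rw [smul_sub, smul_smul, inv_mul_cancel₀ (norm_ne_zero_iff.2 hx0), one_smul]
        have h2 : ‖x - ‖x‖ • ω₁‖ ≤ ‖x - (2:ℝ)⁻¹ • ω₁‖ + |2⁻¹ - ‖x‖| := by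
          calc ‖x - ‖x‖ • ω₁‖ = ‖(x - (2:ℝ)⁻¹ • ω₁) + ((2:ℝ)⁻¹ - ‖x‖) • ω₁‖ := by
                congr 1; module
            _ ≤ ‖x - (2:ℝ)⁻¹ • ω₁‖ + ‖((2:ℝ)⁻¹ - ‖x‖) • ω₁‖ := norm_add_le _ _
            _ = _ := by rw [norm_smul, hω₁, mul_one, Real.norm_eq_abs]
        have h3 : ‖x - ‖x‖ • ω₁‖ < 2 * δ := by
          rw [abs_sub_comm] at hxn
          linarith
        have htp : 0 < ‖x‖⁻¹ := inv_pos.2 (by linarith)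
        have h4 : ‖x - ‖x‖ • ω₁‖ < ε * ‖x‖ := by nlinarith
        calc ‖u - ω₁‖ = ‖x‖⁻¹ * ‖x - ‖x‖ • ω₁‖ := by
              rw [h1, norm_smul, norm_inv, norm_norm]
          _ < ‖x‖⁻¹ * (ε * ‖x‖) := by exact mul_lt_mul_of_pos_left h4 htp
          _ = ε := by field_simp
      have hcu : 0 < CU u - CL u := by
        have h5 := hCUlip ω₁ u
        have h6 := hCLlip u ω₁
        rw [norm_sub_rev ω₁ u] at h5
        have h7 : k₁ * ‖u - ω₁‖ ≤ k₁ * ε := mul_le_mul_of_nonneg_left hdiff.le hk₁0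
        nlinarith
      refine Set.mem_smul.2 ⟨‖x‖, ?_, u, ?_, ?_⟩
      · exact ⟨by linarith, hxub⟩
      · exact ⟨⟨u, (mem_sphere_zero_iff_norm).2 hun⟩, hcu, rfl⟩
      · rw [hu, smul_smul, mul_inv_cancel₀ (norm_ne_zero_iff.2 hx0), one_smul]
    rw [Measure.toSphere_apply' _ hSmeas]
    have hdim : Module.finrank ℝ (EuclideanSpace ℝ (Fin p)) = p := finrank_euclideanSpace_fin
    refine ENNReal.mul_pos ?_ ?_
    · rw [hdim]
      exact_mod_cast Nat.cast_ne_zero.2 (by omega)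
    · exact ne_of_gt (lt_of_lt_of_le (Metric.measure_ball_pos _ _ hδpos) (measure_mono hball))
  -- the key inner-product positivity
  have hFcont : Continuous (fun ω : Metric.sphere (0 : EuclideanSpace ℝ (Fin p)) 1 =>
      (CU (ω : EuclideanSpace ℝ (Fin p)) - CL (ω : EuclideanSpace ℝ (Fin p))) •
        (ω : EuclideanSpace ℝ (Fin p))) :=
    ((hCUcont.sub hCLcont).comp continuous_subtype_val).smul continuous_subtype_val
  have hFint : Integrable (fun ω : Metric.sphere (0 : EuclideanSpace ℝ (Fin p)) 1 =>
      (CU (ω : EuclideanSpace ℝ (Fin p)) - CL (ω : EuclideanSpace ℝ (Fin p))) •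
        (ω : EuclideanSpace ℝ (Fin p)))
      (volume : Measure (EuclideanSpace ℝ (Fin p))).toSphere :=
    hFcont.integrable_of_hasCompactSupport (isClosed_tsupport _).isCompact
  have key : ∀ a b : Fin n, V a = 1 → V b = -1 → 0 < ⟪X a - X b, v⟫ := by
    intro a b ha hb
    have hlow : ∀ ω : Metric.sphere (0 : EuclideanSpace ℝ (Fin p)) 1,
        CU (ω : EuclideanSpace ℝ (Fin p)) - CL (ω : EuclideanSpace ℝ (Fin p)) ≤
          ⟪X a - X b, (ω : EuclideanSpace ℝ (Fin p))⟫ := by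
      intro ω
      have h1 := hCU_le (ω : EuclideanSpace ℝ (Fin p)) a ha
      have h2 := hCL_ge (ω : EuclideanSpace ℝ (Fin p)) b hb
      have h3 : ⟪X a - X b, (ω : EuclideanSpace ℝ (Fin p))⟫
          = ⟪(ω : EuclideanSpace ℝ (Fin p)), X a⟫ - ⟪(ω : EuclideanSpace ℝ (Fin p)), X b⟫ := by
        rw [inner_sub_left, real_inner_comm (X a), real_inner_comm (X b)]
      linarith
    have hpt : ∀ ω ∈ S, 0 < ⟪X a - X b,
        (CU (ω : EuclideanSpace ℝ (Fin p)) - CL (ω : EuclideanSpace ℝ (Fin p))) •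
          (ω : EuclideanSpace ℝ (Fin p))⟫ := by
      intro ω hω
      have hω' : 0 < CU (ω : EuclideanSpace ℝ (Fin p)) - CL (ω : EuclideanSpace ℝ (Fin p)) := hω
      rw [real_inner_smul_right]
      exact mul_pos hω' (lt_of_lt_of_le hω' (hlow ω))
    have h1 : ⟪X a - X b, v⟫ = ∫ ω in S, ⟪X a - X b,
        (CU (ω : EuclideanSpace ℝ (Fin p)) - CL (ω : EuclideanSpace ℝ (Fin p))) •
          (ω : EuclideanSpace ℝ (Fin p))⟫ ∂(volume : Measure (EuclideanSpace ℝ (Fin p))).toSphere := by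
      rw [hv]
      exact (integral_inner hFint.integrableOn (X a - X b)).symm
    rw [h1]
    rw [setIntegral_pos_iff_support_of_nonneg_ae ?_ ?_]
    · refine lt_of_lt_of_le hνS (measure_mono ?_)
      intro ω hω
      exact ⟨(hpt ω hω).ne', hω⟩
    · filter_upwards [ae_restrict_mem hSmeas] with ω hω
      exact (hpt ω hω).le
    · exact (Continuous.inner continuous_const hFcont).integrable_of_hasCompactSupport
        (isClosed_tsupport _).isCompact |>.integrableOn
  -- v ≠ 0
  have hvne : v ≠ 0 := by
    intro h0
    have := key k₀ j₀ hk₀ hj₀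
    rw [h0, inner_zero_right] at this
    exact lt_irrefl 0 this
  have hvnorm : 0 < ‖v‖ := norm_pos_iff.2 hvne
  set w : EuclideanSpace ℝ (Fin p) := ‖v‖⁻¹ • v with hw
  have hwn : ‖w‖ = 1 := norm_smul_inv_norm hvne
  -- the gap is positive at w
  have hcw : 0 < CU w - CL w := by
    obtain ⟨a, ha, haeq⟩ := (hCU w).1
    obtain ⟨b, hb, hbeq⟩ := (hCL w).1
    have haeq' : ⟪w, X a⟫ = CU w := haeq
    have hbeq' : ⟪w, X b⟫ = CL w := hbeq
    have h1 : CU w - CL w = ⟪X a - X b, w⟫ := by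
      rw [inner_sub_left]
      have hA : ⟪X a, w⟫ = ⟪w, X a⟫ := real_inner_comm _ _
      have hB : ⟪X b, w⟫ = ⟪w, X b⟫ := real_inner_comm _ _
      rw [hA, hB, haeq', hbeq']
    have h2 : ⟪X a - X b, w⟫ = ‖v‖⁻¹ * ⟪X a - X b, v⟫ := real_inner_smul_right _ _ _
    rw [h1, h2]
    exact mul_pos (inv_pos.2 hvnorm) (key a b ha hb)
  -- bounds on CL w and CU w
  have hCUw : |CU w| ≤ k₁ := by
    obtain ⟨a, ha, haeq⟩ := (hCU w).1
    have haeq' : ⟪w, X a⟫ = CU w := haeq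
    rw [← haeq']
    calc |⟪w, X a⟫| ≤ ‖w‖ * ‖X a‖ := abs_real_inner_le_norm _ _
      _ = ‖X a‖ := by rw [hwn, one_mul]
      _ ≤ k₁ := hk₁ a
  have hCLw : |CL w| ≤ k₁ := by
    obtain ⟨b, hb, hbeq⟩ := (hCL w).1
    have hbeq' : ⟪w, X b⟫ = CL w := hbeq
    rw [← hbeq']
    calc |⟪w, X b⟫| ≤ ‖w‖ * ‖X b‖ := abs_real_inner_le_norm _ _
      _ = ‖X b‖ := by rw [hwn, one_mul]
      _ ≤ k₁ := hk₁ b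
  have hCUw' := abs_le.1 hCUw
  have hCLw' := abs_le.1 hCLw
  have hγIcc : (CL w + CU w) / 2 ∈ Set.Icc l₀ u₀ := by
    subst hl₀ hu₀
    refine Set.mem_Icc.2 ⟨by linarith [hCUw'.1, hCLw'.1], by linarith [hCUw'.2, hCLw'.2]⟩
  refine ⟨hvne, ⟨hwn, hcw⟩, hγIcc, hwn, hγIcc, ?_⟩
  intro i
  constructor
  · intro h
    rcases hV i with hi | hi
    · exfalso
      have h1 : ⟪w, X i⟫ ≤ CL w := hCL_ge w i hi
      replace h : 0 < ⟪w, X i⟫ - (CL w + CU w) / 2 := h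
      linarith
    · exact hi
  · intro h
    rcases hV i with hi | hi
    · exact hi
    · exfalso
      have h1 : CU w ≤ ⟪w, X i⟫ := hCU_le w i hi
      replace h : ⟪w, X i⟫ - (CL w + CU w) / 2 ≤ 0 := h
      linarith
end

section
/- There exists a unique ω̌ ∈ R at which C_R* attains its maximum over R; moreover λ̌ := C_R*(ω̌) > 0, and setting ǔ = C_L*(ω̌), the pair (ω̌, ǔ) is the unique element of R × ℝ satisfying both C_L*(ω) − u ≤ 0 and C_U*(ω) − u ≥ λ̌; at this pair the constraints hold with equality, i.e. C_L*(ω̌) = ǔ and C_U*(ω̌) − ǔ = λ̌. -/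
/-!
The margin `C_U* - C_L*` is a minimum of linear functions minus a maximum of linear functions,
hence concave and positively homogeneous. It is continuous, so it attains its maximum on the
compact set `R`, and the maximum is positive because the margin is positive at the feasible
direction `ω₁`. If two distinct directions of `R` were maximizers, their normalized midpoint
would lie in `R`; by concavity the margin at the midpoint is at least the maximum, and since the
midpoint has norm `< 1` (strict convexity of the ball), normalizing multiplies that positive
value by a factor `> 1`, a contradiction. Any feasible pair `(ω, u)` for the level `λ̌` has
margin `≥ λ̌` at `ω`, so `ω` is the maximizer and the constraints force `u = C_L*(ω̌)`.
-/

open scoped RealInnerProductSpace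

section Continuity

variable {X ι L : Type*} [TopologicalSpace X] [Finite ι] [LinearOrder L] [TopologicalSpace L]
  [OrderClosedTopology L] {g : ι → X → L} {S : Set ι} {f : X → L}

theorem continuous_of_forall_isGreatest (hg : ∀ j, Continuous (g j))
    (hf : ∀ y, IsGreatest ((g · y) '' S) (f y)) : Continuous f := by
  refine continuous_iff_continuousAt.2 fun y₀ => ?_
  obtain ⟨⟨j₀, hj₀, -⟩, -⟩ := hf y₀
  set T := S.toFinite.toFinset
  have hT : T.Nonempty := ⟨j₀, by simpa [T] using hj₀⟩
  have hfT : f = fun y => T.sup' hT (g · y) := by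
    funext y
    refine (hf y).unique ⟨?_, ?_⟩
    · obtain ⟨j, hj, he⟩ := T.exists_mem_eq_sup' hT (g · y)
      exact ⟨j, by simpa [T] using hj, he.symm⟩
    · rintro _ ⟨j, hj, rfl⟩
      exact T.le_sup' (g · y) (by simpa [T] using hj)
  rw [hfT]
  exact (Continuous.finset_sup'_apply hT fun j _ => hg j).continuousAt

theorem continuous_of_forall_isLeast (hg : ∀ j, Continuous (g j))
    (hf : ∀ y, IsLeast ((g · y) '' S) (f y)) : Continuous f :=
  continuous_of_forall_isGreatest (L := Lᵒᵈ) hg fun y => (hf y).dual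

end Continuity

section Sublinear

variable {E ι : Type*} [NormedAddCommGroup E] [InnerProductSpace ℝ E] {x : ι → E} {S : Set ι}
  {f : E → ℝ}

theorem map_smul_add_smul_le_of_forall_isGreatest
    (hf : ∀ ω, IsGreatest ((fun j => ⟪ω, x j⟫) '' S) (f ω)) {a b : ℝ} (ha : 0 ≤ a) (hb : 0 ≤ b)
    (ω ω' : E) : f (a • ω + b • ω') ≤ a * f ω + b * f ω' := by
  obtain ⟨j, hj, he : ⟪a • ω + b • ω', x j⟫ = _⟩ := (hf (a • ω + b • ω')).1
  rw [← he, inner_add_left, real_inner_smul_left, real_inner_smul_left]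
  have h := (hf ω).2 ⟨j, hj, rfl⟩
  have h' := (hf ω').2 ⟨j, hj, rfl⟩
  gcongr

theorem le_map_smul_add_smul_of_forall_isLeast
    (hf : ∀ ω, IsLeast ((fun j => ⟪ω, x j⟫) '' S) (f ω)) {a b : ℝ} (ha : 0 ≤ a) (hb : 0 ≤ b)
    (ω ω' : E) : a * f ω + b * f ω' ≤ f (a • ω + b • ω') := by
  obtain ⟨j, hj, he : ⟪a • ω + b • ω', x j⟫ = _⟩ := (hf (a • ω + b • ω')).1
  rw [← he, inner_add_left, real_inner_smul_left, real_inner_smul_left]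
  have h := (hf ω).2 ⟨j, hj, rfl⟩
  have h' := (hf ω').2 ⟨j, hj, rfl⟩
  gcongr

end Sublinear

theorem lt_of_isGreatest_of_isLeast_of_threshold {ι : Type*} {s v : ι → ℝ} {u a b : ℝ}
    (hsep : ∀ j, (0 < s j - u → v j = 1) ∧ (s j - u ≤ 0 → v j = -1))
    (ha : IsGreatest (s '' {j | v j = -1}) a) (hb : IsLeast (s '' {j | v j = 1}) b) : a < b := by
  obtain ⟨k, hk : v k = -1, rfl⟩ := ha.1
  obtain ⟨l, hl : v l = 1, rfl⟩ := hb.1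
  have hk' : s k ≤ u := not_lt.1 fun h => by linarith [(hsep k).1 (sub_pos.2 h)]
  have hl' : u < s l := not_le.1 fun h => by linarith [(hsep l).2 (sub_nonpos.2 h)]
  linarith

def IsChordConnected {E : Type*} [NormedAddCommGroup E] [NormedSpace ℝ E] (R : Set E) : Prop :=
  ∀ u ∈ R, ∀ w ∈ R, ∀ α ∈ Set.Icc (0 : ℝ) 1, α • u + (1 - α) • w ≠ 0 →
    ‖α • u + (1 - α) • w‖⁻¹ • (α • u + (1 - α) • w) ∈ R

theorem eq_of_isMaxOn_of_superlinear {E : Type*} [NormedAddCommGroup E] [NormedSpace ℝ E]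
    [StrictConvexSpace ℝ E] {R : Set E} (hRsub : R ⊆ Metric.sphere 0 1) (hR : IsChordConnected R)
    {M : E → ℝ} (hM : ∀ a b : ℝ, 0 ≤ a → 0 ≤ b → ∀ ω ω', a * M ω + b * M ω' ≤ M (a • ω + b • ω'))
    {ω ω' : E} (hω : ω ∈ R) (hω' : ω' ∈ R) (hmax : IsMaxOn M R ω) (hmax' : IsMaxOn M R ω')
    (hpos : 0 < M ω) : ω = ω' := by
  by_contra hne
  have hval : M ω' = M ω := le_antisymm (hmax hω') (hmax' hω)
  set w := (2⁻¹ : ℝ) • ω + (1 - 2⁻¹ : ℝ) • ω'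
  have hMw : M ω ≤ M w := by
    have : 2⁻¹ * M ω + (1 - 2⁻¹) * M ω' ≤ M w := hM 2⁻¹ (1 - 2⁻¹) (by norm_num) (by norm_num) ω ω'
    linarith
  have hM0 : M 0 ≤ 0 := by
    have := hM 1 1 zero_le_one zero_le_one 0 0
    simp only [one_mul, smul_zero, add_zero] at this
    linarith
  have hw0 : w ≠ 0 := fun h => by rw [h] at hMw; linarith
  have hw1 : ‖w‖ < 1 := norm_combo_lt_of_ne
    (mem_sphere_zero_iff_norm.1 (hRsub hω)).le (mem_sphere_zero_iff_norm.1 (hRsub hω')).le hne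
    (by norm_num) (by norm_num) (by norm_num)
  have hwR : ‖w‖⁻¹ • w ∈ R := hR ω hω ω' hω' 2⁻¹ ⟨by norm_num, by norm_num⟩ hw0
  have hnormalize : ‖w‖⁻¹ * M w ≤ M (‖w‖⁻¹ • w) := by
    simpa using hM ‖w‖⁻¹ 0 (by positivity) le_rfl w 0
  have hgrow : M w < ‖w‖⁻¹ * M w :=
    lt_mul_left (hpos.trans_le hMw) ((one_lt_inv₀ (norm_pos_iff.2 hw0)).2 hw1)
  have hle : M (‖w‖⁻¹ • w) ≤ M ω := hmax hwR
  linarith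

theorem modeMidpoint_exists_unique_general
    (q m : ℕ)
    (x : Fin m → EuclideanSpace ℝ (Fin q)) (v : Fin m → ℝ)
    (R : Set (EuclideanSpace ℝ (Fin q)))
    (hRsub : R ⊆ Metric.sphere (0 : EuclideanSpace ℝ (Fin q)) 1)
    (hRclosed : IsClosed R)
    (hRgeo : ∀ u ∈ R, ∀ w ∈ R, ∀ α ∈ Set.Icc (0 : ℝ) 1,
      α • u + (1 - α) • w ≠ 0 →
        ‖α • u + (1 - α) • w‖⁻¹ • (α • u + (1 - α) • w) ∈ R)
    (ω₁ : EuclideanSpace ℝ (Fin q)) (u₁ : ℝ) (hω₁R : ω₁ ∈ R)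
    (hfeas : ∀ j, (0 < ⟪ω₁, x j⟫ - u₁ → v j = 1) ∧ (⟪ω₁, x j⟫ - u₁ ≤ 0 → v j = -1))
    (CL CU : EuclideanSpace ℝ (Fin q) → ℝ)
    (hCL : ∀ ω, IsGreatest ((fun j => ⟪ω, x j⟫) '' {j | v j = -1}) (CL ω))
    (hCU : ∀ ω, IsLeast ((fun j => ⟪ω, x j⟫) '' {j | v j = 1}) (CU ω)) :
    ∃ ωc : EuclideanSpace ℝ (Fin q),
      (ωc ∈ R ∧ ∀ ω ∈ R, CU ω - CL ω ≤ CU ωc - CL ωc) ∧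
      (∀ ω' : EuclideanSpace ℝ (Fin q),
        (ω' ∈ R ∧ ∀ ω ∈ R, CU ω - CL ω ≤ CU ω' - CL ω') → ω' = ωc) ∧
      0 < CU ωc - CL ωc ∧
      (∀ pr : EuclideanSpace ℝ (Fin q) × ℝ,
        (pr.1 ∈ R ∧ CL pr.1 - pr.2 ≤ 0 ∧ CU ωc - CL ωc ≤ CU pr.1 - pr.2)
          ↔ pr = (ωc, CL ωc)) ∧
      CL ωc - CL ωc = 0 ∧ CU ωc - CL ωc = CU ωc - CL ωc := by
  have hinner : ∀ j, Continuous fun ω : EuclideanSpace ℝ (Fin q) => ⟪ω, x j⟫ :=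
    fun j => continuous_id.inner continuous_const
  have hcont : Continuous fun ω => CU ω - CL ω :=
    (continuous_of_forall_isLeast hinner hCU).sub (continuous_of_forall_isGreatest hinner hCL)
  have hRcompact : IsCompact R := (isCompact_sphere 0 1).of_isClosed_subset hRclosed hRsub
  obtain ⟨ωc, hωcR, hmax⟩ := hRcompact.exists_isMaxOn ⟨ω₁, hω₁R⟩ hcont.continuousOn
  have hpos : 0 < CU ωc - CL ωc := (sub_pos.2
    (lt_of_isGreatest_of_isLeast_of_threshold hfeas (hCL ω₁) (hCU ω₁))).trans_le (hmax hω₁R)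
  have huniq : ∀ ω ∈ R, IsMaxOn (fun ω => CU ω - CL ω) R ω → ω = ωc := fun ω hω hmaxω =>
    eq_of_isMaxOn_of_superlinear hRsub hRgeo
      (fun a b ha hb ω ω' => by
        linarith [le_map_smul_add_smul_of_forall_isLeast hCU ha hb ω ω',
          map_smul_add_smul_le_of_forall_isGreatest hCL ha hb ω ω'])
      hω hωcR hmaxω hmax (hpos.trans_le (hmaxω hωcR))
  refine ⟨ωc, ⟨hωcR, fun ω hω => hmax hω⟩, fun ω ⟨hω, h⟩ => huniq ω hω h, hpos, ?_, sub_self _,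
    rfl⟩
  rintro ⟨ω, u⟩
  constructor
  · rintro ⟨hω, hlow, hup⟩
    dsimp only at hω hlow hup
    have hmaxω : CU ωc - CL ωc ≤ CU ω - CL ω := by linarith
    obtain rfl := huniq ω hω fun ω' hω' => le_trans (hmax hω') hmaxω
    simp only [Prod.mk.injEq, true_and]
    linarith
  · rintro ⟨⟩
    simp [hωcR]

/-- Uniqueness of the mode-midpoint: in the labeled-points setting with `R ⊆ S^{q−1}`
closed and geodesically connected (in the chord sense) and a feasible point, there is a
unique `ω̌ ∈ R` maximizing `C_R*` over `R`; moreover `λ̌ = C_R*(ω̌) > 0`, and with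
`ǔ = C_L*(ω̌)`, the pair `(ω̌, ǔ)` is the unique element of `R × ℝ` satisfying
`C_L*(ω) − u ≤ 0` and `C_U*(ω) − u ≥ λ̌`; at this pair the constraints hold with
equality. -/
theorem modeMidpoint_exists_unique
    (q m : ℕ) (hq : 1 ≤ q)
    (x : Fin m → EuclideanSpace ℝ (Fin q)) (v : Fin m → ℝ)
    (hv : ∀ j, v j = -1 ∨ v j = 1)
    (hneg : ∃ k, v k = -1) (hpos : ∃ l, v l = 1)
    (R : Set (EuclideanSpace ℝ (Fin q)))
    (hRsub : R ⊆ Metric.sphere (0 : EuclideanSpace ℝ (Fin q)) 1)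
    (hRclosed : IsClosed R)
    (hRgeo : ∀ u ∈ R, ∀ w ∈ R, ∀ α ∈ Set.Icc (0 : ℝ) 1,
      α • u + (1 - α) • w ≠ 0 →
        ‖α • u + (1 - α) • w‖⁻¹ • (α • u + (1 - α) • w) ∈ R)
    (ω₁ : EuclideanSpace ℝ (Fin q)) (u₁ : ℝ) (hω₁R : ω₁ ∈ R)
    (hfeas : ∀ j, (0 < ⟪ω₁, x j⟫ - u₁ → v j = 1) ∧ (⟪ω₁, x j⟫ - u₁ ≤ 0 → v j = -1))
    (CL CU : EuclideanSpace ℝ (Fin q) → ℝ)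
    (hCL : ∀ ω, IsGreatest ((fun j => ⟪ω, x j⟫) '' {j | v j = -1}) (CL ω))
    (hCU : ∀ ω, IsLeast ((fun j => ⟪ω, x j⟫) '' {j | v j = 1}) (CU ω)) :
    ∃ ωc : EuclideanSpace ℝ (Fin q),
      (ωc ∈ R ∧ ∀ ω ∈ R, CU ω - CL ω ≤ CU ωc - CL ωc) ∧
      (∀ ω' : EuclideanSpace ℝ (Fin q),
        (ω' ∈ R ∧ ∀ ω ∈ R, CU ω - CL ω ≤ CU ω' - CL ω') → ω' = ωc) ∧
      0 < CU ωc - CL ωc ∧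
      (∀ pr : EuclideanSpace ℝ (Fin q) × ℝ,
        (pr.1 ∈ R ∧ CL pr.1 - pr.2 ≤ 0 ∧ CU ωc - CL ωc ≤ CU pr.1 - pr.2)
          ↔ pr = (ωc, CL ωc)) ∧
      CL ωc - CL ωc = 0 ∧ CU ωc - CL ωc = CU ωc - CL ωc :=
  modeMidpoint_exists_unique_general q m x v R hRsub hRclosed hRgeo ω₁ u₁ hω₁R hfeas CL CU hCL hCU
end

section
/- There exists a unique ω̌ ∈ S^{p−1} maximizing C_R over the whole unit sphere S^{p−1}; moreover, setting γ̌* = C_L(ω̌) and γ̌ = [C_L(ω̌) + C_U(ω̌)]/2, one has γ̌* ∈ [l₀, u₀] and both (ω̌, γ̌*) and (ω̌, γ̌) belong to Φ. -/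
open scoped RealInnerProductSpace

/-- In the change-plane level-set setting, there is a unique unit vector `ω̌` maximizing
`C_R` over the whole sphere `S^{p−1}`; with `γ̌* = C_L(ω̌)` and
`γ̌ = (C_L(ω̌) + C_U(ω̌))/2`, one has `γ̌* ∈ [l₀, u₀]` and both `(ω̌, γ̌*)` and
`(ω̌, γ̌)` belong to the level set `Φ`. -/
theorem changePlane_modeMidpoint_mem_levelSet
    (p n : ℕ) (hp : 1 ≤ p)
    (X : Fin n → EuclideanSpace ℝ (Fin p)) (V : Fin n → ℝ)
    (hV : ∀ i, V i = -1 ∨ V i = 1)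
    (ω₁ : EuclideanSpace ℝ (Fin p)) (γ₁ : ℝ) (hω₁ : ‖ω₁‖ = 1)
    (hgen : ∀ i, (0 < ⟪ω₁, X i⟫ - γ₁ → V i = 1) ∧ (⟪ω₁, X i⟫ - γ₁ ≤ 0 → V i = -1))
    (hneg : ∃ j, V j = -1) (hpos : ∃ k, V k = 1)
    (CL CU : EuclideanSpace ℝ (Fin p) → ℝ)
    (hCL : ∀ ω, IsGreatest ((fun i => ⟪ω, X i⟫) '' {i | V i = -1}) (CL ω))
    (hCU : ∀ ω, IsLeast ((fun i => ⟪ω, X i⟫) '' {i | V i = 1}) (CU ω))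
    (k₁ ρ : ℝ) (hk₁ : ∀ i, ‖X i‖ ≤ k₁) (hρ : 0 < ρ)
    (l₀ u₀ : ℝ) (hl₀ : l₀ = -k₁ - ρ) (hu₀ : u₀ = k₁ + ρ) :
    ∃ ωc : EuclideanSpace ℝ (Fin p),
      (‖ωc‖ = 1 ∧ ∀ ω : EuclideanSpace ℝ (Fin p), ‖ω‖ = 1 →
        CU ω - CL ω ≤ CU ωc - CL ωc) ∧
      (∀ ω' : EuclideanSpace ℝ (Fin p),
        (‖ω'‖ = 1 ∧ ∀ ω : EuclideanSpace ℝ (Fin p), ‖ω‖ = 1 →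
          CU ω - CL ω ≤ CU ω' - CL ω') → ω' = ωc) ∧
      CL ωc ∈ Set.Icc l₀ u₀ ∧
      (ωc, CL ωc)
        ∈ {q : EuclideanSpace ℝ (Fin p) × ℝ | ‖q.1‖ = 1 ∧ q.2 ∈ Set.Icc l₀ u₀ ∧
            ∀ i, (0 < ⟪q.1, X i⟫ - q.2 → V i = 1) ∧ (⟪q.1, X i⟫ - q.2 ≤ 0 → V i = -1)} ∧
      (ωc, (CL ωc + CU ωc) / 2)
        ∈ {q : EuclideanSpace ℝ (Fin p) × ℝ | ‖q.1‖ = 1 ∧ q.2 ∈ Set.Icc l₀ u₀ ∧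
            ∀ i, (0 < ⟪q.1, X i⟫ - q.2 → V i = 1) ∧ (⟪q.1, X i⟫ - q.2 ≤ 0 → V i = -1)} := by
  classical
  obtain ⟨j₀, hj₀⟩ := hneg
  obtain ⟨k₀, hk₀⟩ := hpos
  -- attainment and bound lemmas
  have hCLle : ∀ ω i, V i = -1 → ⟪ω, X i⟫ ≤ CL ω := fun ω i hi => (hCL ω).2 ⟨i, hi, rfl⟩
  have hCLmem : ∀ ω, ∃ i, V i = -1 ∧ CL ω = ⟪ω, X i⟫ := by
    intro ω; obtain ⟨i, hi, h⟩ := (hCL ω).1; exact ⟨i, hi, h.symm⟩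
  have hCUle : ∀ ω i, V i = 1 → CU ω ≤ ⟪ω, X i⟫ := fun ω i hi => (hCU ω).2 ⟨i, hi, rfl⟩
  have hCUmem : ∀ ω, ∃ i, V i = 1 ∧ CU ω = ⟪ω, X i⟫ := by
    intro ω; obtain ⟨i, hi, h⟩ := (hCU ω).1; exact ⟨i, hi, h.symm⟩
  have hk₁0 : 0 ≤ k₁ := le_trans (norm_nonneg _) (hk₁ j₀)
  have habs : ∀ (v : EuclideanSpace ℝ (Fin p)) i, |⟪v, X i⟫| ≤ k₁ * ‖v‖ := by
    intro v i
    calc |⟪v, X i⟫| ≤ ‖v‖ * ‖X i‖ := abs_real_inner_le_norm _ _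
      _ ≤ ‖v‖ * k₁ := mul_le_mul_of_nonneg_left (hk₁ i) (norm_nonneg v)
      _ = k₁ * ‖v‖ := mul_comm _ _
  have hCLabs : ∀ v, |CL v| ≤ k₁ * ‖v‖ := by
    intro v; obtain ⟨i, _, h⟩ := hCLmem v; rw [h]; exact habs v i
  have hCUabs : ∀ v, |CU v| ≤ k₁ * ‖v‖ := by
    intro v; obtain ⟨i, _, h⟩ := hCUmem v; rw [h]; exact habs v i
  -- subadditivity / superadditivity
  have hCLsub : ∀ a b, CL (a + b) ≤ CL a + CL b := by
    intro a b
    obtain ⟨i, hi, h⟩ := hCLmem (a + b)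
    rw [h, inner_add_left]
    exact add_le_add (hCLle a i hi) (hCLle b i hi)
  have hCUsup : ∀ a b, CU a + CU b ≤ CU (a + b) := by
    intro a b
    obtain ⟨i, hi, h⟩ := hCUmem (a + b)
    rw [h, inner_add_left]
    exact add_le_add (hCUle a i hi) (hCUle b i hi)
  -- positive homogeneity
  have hCLsmul : ∀ (c : ℝ), 0 < c → ∀ v, CL (c • v) = c * CL v := by
    intro c hc v
    apply le_antisymm
    · obtain ⟨i, hi, h⟩ := hCLmem (c • v)
      rw [h, real_inner_smul_left]
      exact mul_le_mul_of_nonneg_left (hCLle v i hi) hc.le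
    · obtain ⟨i, hi, h⟩ := hCLmem v
      rw [h, ← real_inner_smul_left]
      exact hCLle _ i hi
  have hCUsmul : ∀ (c : ℝ), 0 < c → ∀ v, CU (c • v) = c * CU v := by
    intro c hc v
    apply le_antisymm
    · obtain ⟨i, hi, h⟩ := hCUmem v
      rw [h, ← real_inner_smul_left]
      exact hCUle _ i hi
    · obtain ⟨i, hi, h⟩ := hCUmem (c • v)
      rw [h, real_inner_smul_left]
      exact mul_le_mul_of_nonneg_left (hCUle v i hi) hc.le
  -- Lipschitz continuity
  have hCLlip : ∀ a b, CL a - CL b ≤ k₁ * ‖a - b‖ := by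
    intro a b
    have h1 : CL a ≤ CL (a - b) + CL b := by
      have := hCLsub (a - b) b; rwa [sub_add_cancel] at this
    have h2 := (abs_le.mp (hCLabs (a - b))).2
    linarith
  have hCUlip : ∀ a b, CU a - CU b ≤ k₁ * ‖a - b‖ := by
    intro a b
    have h1 : CU b + CU (a - b) ≤ CU a := by
      have := hCUsup b (a - b); rwa [add_sub_cancel] at this
    have h2 := (abs_le.mp (hCUabs (a - b))).1
    have h3 : CU a - CU b ≥ CU (a - b) := by linarith
    -- need upper bound, use symmetry
    have h1' : CU a + CU (b - a) ≤ CU b := by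
      have := hCUsup a (b - a); rwa [add_sub_cancel] at this
    have h2' := (abs_le.mp (hCUabs (b - a))).1
    rw [norm_sub_rev b a] at h2'
    linarith
  have hCLcont : Continuous CL := by
    refine LipschitzWith.continuous (K := k₁.toNNReal) (LipschitzWith.of_dist_le_mul ?_)
    intro a b
    rw [Real.dist_eq, dist_eq_norm]
    have hcoe : (k₁.toNNReal : ℝ) = k₁ := Real.coe_toNNReal _ hk₁0
    rw [hcoe, abs_sub_le_iff]
    refine ⟨hCLlip a b, ?_⟩
    have := hCLlip b a; rwa [norm_sub_rev b a] at this
  have hCUcont : Continuous CU := by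
    refine LipschitzWith.continuous (K := k₁.toNNReal) (LipschitzWith.of_dist_le_mul ?_)
    intro a b
    rw [Real.dist_eq, dist_eq_norm]
    have hcoe : (k₁.toNNReal : ℝ) = k₁ := Real.coe_toNNReal _ hk₁0
    rw [hcoe, abs_sub_le_iff]
    refine ⟨hCUlip a b, ?_⟩
    have := hCUlip b a; rwa [norm_sub_rev b a] at this
  -- existence of maximizer
  have hcont : Continuous fun ω => CU ω - CL ω := hCUcont.sub hCLcont
  have hω₁mem : ω₁ ∈ Metric.sphere (0 : EuclideanSpace ℝ (Fin p)) 1 :=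
    mem_sphere_zero_iff_norm.mpr hω₁
  obtain ⟨ωc, hωcmem, hmax⟩ := (isCompact_sphere (0 : EuclideanSpace ℝ (Fin p)) 1).exists_isMaxOn
    ⟨ω₁, hω₁mem⟩ hcont.continuousOn
  have hωc : ‖ωc‖ = 1 := mem_sphere_zero_iff_norm.mp hωcmem
  have hmax' : ∀ ω : EuclideanSpace ℝ (Fin p), ‖ω‖ = 1 → CU ω - CL ω ≤ CU ωc - CL ωc :=
    fun ω hω => hmax (mem_sphere_zero_iff_norm.mpr hω)
  -- positivity of the maximal margin
  have hCLω₁ : CL ω₁ ≤ γ₁ := by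
    obtain ⟨i, hi, h⟩ := hCLmem ω₁
    rw [h]
    by_contra hcon
    have := (hgen i).1 (by linarith [not_le.mp hcon])
    rw [hi] at this; norm_num at this
  have hCUω₁ : γ₁ < CU ω₁ := by
    obtain ⟨i, hi, h⟩ := hCUmem ω₁
    rw [h]
    by_contra hcon
    have := (hgen i).2 (by linarith [not_lt.mp hcon])
    rw [hi] at this; norm_num at this
  have hM : 0 < CU ωc - CL ωc := lt_of_lt_of_le (by linarith) (hmax' ω₁ hω₁)
  refine ⟨ωc, ⟨hωc, hmax'⟩, ?_, ?_, ?_, ?_⟩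
  · -- uniqueness
    rintro ω' ⟨hω', hmax''⟩
    by_contra hne
    have hM' : CU ω' - CL ω' = CU ωc - CL ωc :=
      le_antisymm (hmax' ω' hω') (hmax'' ωc hωc)
    set v := ω' + ωc with hv
    have hv0 : v ≠ 0 := by
      intro h
      obtain ⟨i, _, hL⟩ := hCLmem (0 : EuclideanSpace ℝ (Fin p))
      obtain ⟨i2, _, hU⟩ := hCUmem (0 : EuclideanSpace ℝ (Fin p))
      have hL0 : CL (0 : EuclideanSpace ℝ (Fin p)) = 0 := by rw [hL, inner_zero_left]
      have hU0 : CU (0 : EuclideanSpace ℝ (Fin p)) = 0 := by rw [hU, inner_zero_left]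
      have h1 := hCLsub ω' ωc
      have h2 := hCUsup ω' ωc
      rw [← hv, h, hL0] at h1
      rw [← hv, h, hU0] at h2
      linarith
    have hip : ⟪ω', ωc⟫ < 1 := by
      rcases lt_or_eq_of_le (by
        have := real_inner_le_norm ω' ωc
        rw [hω', hωc] at this; simpa using this) with h | h
      · exact h
      · exact absurd ((inner_eq_one_iff_of_norm_eq_one hω' hωc).mp h) hne
    have hnv : ‖v‖ < 2 := by
      have hsq : ‖v‖ ^ 2 < 4 := by
        have := norm_add_sq_real ω' ωc
        rw [hω', hωc] at this
        rw [hv, this]; nlinarith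
      nlinarith [norm_nonneg v]
    have hnvpos : 0 < ‖v‖ := norm_pos_iff.mpr hv0
    set u := ‖v‖⁻¹ • v with hu'
    have hu : ‖u‖ = 1 := by
      rw [hu', norm_smul, norm_inv, norm_norm, inv_mul_cancel₀ hnvpos.ne']
    have hCRv : 2 * (CU ωc - CL ωc) ≤ CU v - CL v := by
      have h1 := hCLsub ω' ωc
      have h2 := hCUsup ω' ωc
      rw [← hv] at h1 h2
      linarith
    have hCRu : CU u - CL u = ‖v‖⁻¹ * (CU v - CL v) := by
      rw [hu', hCUsmul _ (inv_pos.mpr hnvpos), hCLsmul _ (inv_pos.mpr hnvpos)]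
      ring
    have hgt : CU ωc - CL ωc < CU u - CL u := by
      rw [hCRu]
      calc CU ωc - CL ωc = ‖v‖⁻¹ * ((CU ωc - CL ωc) * ‖v‖) := by
            field_simp
        _ < ‖v‖⁻¹ * (2 * (CU ωc - CL ωc)) := by
            apply mul_lt_mul_of_pos_left _ (inv_pos.mpr hnvpos)
            nlinarith
        _ ≤ ‖v‖⁻¹ * (CU v - CL v) :=
            mul_le_mul_of_nonneg_left hCRv (inv_pos.mpr hnvpos).le
    exact absurd (hmax' u hu) (not_le.mpr hgt)
  · -- CL ωc ∈ [l₀, u₀]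
    have := hCLabs ωc
    rw [hωc, mul_one] at this
    have := abs_le.mp this
    constructor <;> [rw [hl₀]; rw [hu₀]] <;> linarith [this.1, this.2]
  · -- (ωc, CL ωc) ∈ Φ
    have hb := abs_le.mp (by have := hCLabs ωc; rwa [hωc, mul_one] at this)
    refine ⟨hωc, ⟨by rw [hl₀]; linarith [hb.1], by rw [hu₀]; linarith [hb.2]⟩, ?_⟩
    intro i
    constructor
    · intro hp'
      rcases hV i with h | h
      · exact absurd (hCLle ωc i h) (by dsimp only at hp' ⊢; linarith)
      · exact h
    · intro hp'
      rcases hV i with h | h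
      · exact h
      · exact absurd (hCUle ωc i h) (by dsimp only at hp' ⊢; linarith)
  · -- (ωc, midpoint) ∈ Φ
    have hbL := abs_le.mp (by have := hCLabs ωc; rwa [hωc, mul_one] at this)
    have hbU := abs_le.mp (by have := hCUabs ωc; rwa [hωc, mul_one] at this)
    refine ⟨hωc, ⟨by rw [hl₀]; dsimp only; linarith [hbL.1, hbU.1],
      by rw [hu₀]; dsimp only; linarith [hbL.2, hbU.2]⟩, ?_⟩
    intro i
    constructor
    · intro hp'
      rcases hV i with h | h
      · exact absurd (hCLle ωc i h) (by dsimp only at hp' ⊢; linarith)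
      · exact h
    · intro hp'
      rcases hV i with h | h
      · exact h
      · exact absurd (hCUle ωc i h) (by dsimp only at hp' ⊢; linarith)
end

section
/- For every integer n ≥ 1, define h∗ : A_n → ℝ^p by h∗(g₁) = L g₁ − n(1 − √(max(1 − ‖g₁‖²/n², 0)))·ω₀, where A_n = {g₁ ∈ ℝ^{p−1} : ‖g₁‖ ≤ n} and B_n = {h₃ ∈ ℝ^p : ‖ω₀ + h₃/n‖ = 1 and ‖h₃‖ ≤ √2·n}. Then h∗ is continuous, maps A_n into B_n, and is a bijection from A_n onto B_n; its inverse is the continuous map h₃ ↦ L*(h₃) (the adjoint of L, i.e. the coordinate vector of the orthogonal projection of h₃ onto the orthogonal complement of ω₀), which is itself a bijection from B_n onto A_n. -/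
/-!
Write `y = L g + a • ω₀` with `g = L* y` and `a = ⟪ω₀, y⟫`; then `‖y‖² = ‖g‖² + a²`. In these
coordinates `B_n` is the hemisphere `‖g‖² + (n + a)² = n²`, `n + a ≥ 0` of the sphere of radius `n`
about `-n • ω₀`, since on that sphere `‖y‖² = -2na`. This hemisphere is the graph of
`n + a = √(n² - ‖g‖²)` over the ball `‖g‖ ≤ n`, which is exactly what `h∗` parametrizes.
-/

open RealInnerProductSpace Metric

variable {E F : Type*} [NormedAddCommGroup E] [InnerProductSpace ℝ E]
  [NormedAddCommGroup F] [InnerProductSpace ℝ F]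

/-- The set `B_r`: the half of the sphere of radius `r` about `-r • u` that is cut out by the
ball of radius `√2 r` about `0`, i.e. the hemisphere containing `0`. -/
def tangentHemisphere (u : F) (r : ℝ) : Set F :=
  {y | ‖u + r⁻¹ • y‖ = 1 ∧ ‖y‖ ≤ √2 * r}

noncomputable def hemisphereChart (L : E →ₗᵢ[ℝ] F) (u : F) (r : ℝ) (g : E) : F :=
  L g - (r * (1 - √(max (1 - ‖g‖ ^ 2 / r ^ 2) 0))) • u

theorem continuous_hemisphereChart (L : E →ₗᵢ[ℝ] F) (u : F) (r : ℝ) :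
    Continuous (hemisphereChart L u r) := by
  unfold hemisphereChart
  fun_prop

section

variable {L : E →ₗᵢ[ℝ] F} {u : F}

theorem inner_map_eq_zero_of_range_le (hL : LinearMap.range L.toLinearMap ≤ (ℝ ∙ u)ᗮ) (x : E) :
    ⟪u, L x⟫ = 0 :=
  Submodule.mem_orthogonal_singleton_iff_inner_right.mp (hL ⟨x, rfl⟩)

theorem norm_map_add_smul_sq (hu : ‖u‖ = 1)
    (hL : LinearMap.range L.toLinearMap ≤ (ℝ ∙ u)ᗮ) (g : E) (a : ℝ) :
    ‖L g + a • u‖ ^ 2 = ‖g‖ ^ 2 + a ^ 2 := by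
  rw [norm_add_sq_real, real_inner_smul_right, real_inner_comm, inner_map_eq_zero_of_range_le hL,
    norm_smul, L.norm_map, Real.norm_eq_abs, hu, mul_one, sq_abs]
  ring

theorem map_add_smul_mem_tangentHemisphere_iff (hu : ‖u‖ = 1)
    (hL : LinearMap.range L.toLinearMap = (ℝ ∙ u)ᗮ) {r : ℝ} (hr : 0 < r) (g : E) (a : ℝ) :
    L g + a • u ∈ tangentHemisphere u r ↔ ‖g‖ ^ 2 + (r + a) ^ 2 = r ^ 2 ∧ 0 ≤ r + a := by
  have hrescale : u + r⁻¹ • (L g + a • u) = r⁻¹ • (L g + (r + a) • u) := by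
    match_scalars <;> field_simp
  have hsphere : ‖u + r⁻¹ • (L g + a • u)‖ = 1 ↔ ‖g‖ ^ 2 + (r + a) ^ 2 = r ^ 2 := by
    rw [hrescale, norm_smul, norm_inv, Real.norm_of_nonneg hr.le, inv_mul_eq_one₀ hr.ne',
      ← norm_map_add_smul_sq hu hL.le]
    exact eq_comm.trans (sq_eq_sq₀ (norm_nonneg (L g + (r + a) • u)) hr.le).symm
  rw [tangentHemisphere, Set.mem_ofPred_eq, hsphere, and_congr_right_iff]
  intro hg
  have hnorm_sq : ‖L g + a • u‖ ^ 2 = -2 * r * a := by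
    rw [norm_map_add_smul_sq hu hL.le]
    linear_combination hg
  rw [← sq_le_sq₀ (norm_nonneg _) (by positivity : 0 ≤ √2 * r), hnorm_sq, mul_pow,
    Real.sq_sqrt zero_le_two]
  constructor <;> intro h <;> nlinarith

theorem hemisphereChart_eq {r : ℝ} (hr : 0 < r) {g : E} (hg : ‖g‖ ≤ r) :
    hemisphereChart L u r g = L g + (√(r ^ 2 - ‖g‖ ^ 2) - r) • u := by
  have hdiff : 0 ≤ r ^ 2 - ‖g‖ ^ 2 := by nlinarith [norm_nonneg g]
  have hheight : r * √(max (1 - ‖g‖ ^ 2 / r ^ 2) 0) = √(r ^ 2 - ‖g‖ ^ 2) := by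
    rw [one_sub_div (by positivity), max_eq_left (div_nonneg hdiff (sq_nonneg r)),
      Real.sqrt_div' _ (sq_nonneg r), Real.sqrt_sq hr.le, mul_div_cancel₀ _ hr.ne']
  rw [hemisphereChart, sub_eq_add_neg, ← neg_smul, mul_one_sub, hheight, neg_sub]

theorem mapsTo_hemisphereChart (hu : ‖u‖ = 1)
    (hL : LinearMap.range L.toLinearMap = (ℝ ∙ u)ᗮ) {r : ℝ} (hr : 0 < r) :
    Set.MapsTo (hemisphereChart L u r) (closedBall 0 r) (tangentHemisphere u r) := by
  intro g hg
  rw [mem_closedBall_zero_iff] at hg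
  have hdiff : 0 ≤ r ^ 2 - ‖g‖ ^ 2 := by nlinarith [norm_nonneg g]
  rw [hemisphereChart_eq hr hg, map_add_smul_mem_tangentHemisphere_iff hu hL hr, add_sub_cancel,
    Real.sq_sqrt hdiff]
  exact ⟨by ring, Real.sqrt_nonneg _⟩

variable [CompleteSpace E] [CompleteSpace F]

local notation "L†" => ContinuousLinearMap.adjoint L.toContinuousLinearMap

theorem LinearIsometry.adjoint_apply_self (f : E →ₗᵢ[ℝ] F) (x : E) :
    f.toContinuousLinearMap.adjoint (f x) = x :=
  congr($(f.adjoint_comp_self) x)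

theorem adjoint_apply_eq_zero_of_range_le (hL : LinearMap.range L.toLinearMap ≤ (ℝ ∙ u)ᗮ) :
    L† u = 0 :=
  ext_inner_right ℝ fun v => by
    rw [ContinuousLinearMap.adjoint_inner_left, inner_zero_left]
    exact inner_map_eq_zero_of_range_le hL v

theorem map_adjoint_add_inner_smul (hu : ‖u‖ = 1)
    (hL : LinearMap.range L.toLinearMap = (ℝ ∙ u)ᗮ) (y : F) :
    L (L† y) + ⟪u, y⟫ • u = y := by
  have hperp : y - ⟪u, y⟫ • u ∈ (ℝ ∙ u)ᗮ := by
    rw [Submodule.mem_orthogonal_singleton_iff_inner_right, inner_sub_right,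
      inner_smul_right, real_inner_self_eq_norm_sq, hu]
    ring
  rw [← hL] at hperp
  obtain ⟨x, hx : L x = y - ⟪u, y⟫ • u⟩ := hperp
  have hadj : L† y = x := by
    have := congrArg L† hx
    rwa [L.adjoint_apply_self, map_sub, map_smul, adjoint_apply_eq_zero_of_range_le hL.le,
      smul_zero, sub_zero, eq_comm] at this
  rw [hadj, hx, sub_add_cancel]

theorem mapsTo_adjoint_tangentHemisphere (hu : ‖u‖ = 1)
    (hL : LinearMap.range L.toLinearMap = (ℝ ∙ u)ᗮ) {r : ℝ} (hr : 0 < r) :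
    Set.MapsTo L† (tangentHemisphere u r) (closedBall 0 r) := by
  intro y hy
  rw [← map_adjoint_add_inner_smul hu hL y, map_add_smul_mem_tangentHemisphere_iff hu hL hr]
    at hy
  rw [mem_closedBall_zero_iff, ← sq_le_sq₀ (norm_nonneg _) hr.le]
  nlinarith [hy.1]

theorem adjoint_hemisphereChart (hL : LinearMap.range L.toLinearMap ≤ (ℝ ∙ u)ᗮ) (r : ℝ) (g : E) :
    L† (hemisphereChart L u r g) = g := by
  rw [hemisphereChart, map_sub, map_smul, L.adjoint_apply_self,
    adjoint_apply_eq_zero_of_range_le hL, smul_zero, sub_zero]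

theorem hemisphereChart_adjoint (hu : ‖u‖ = 1)
    (hL : LinearMap.range L.toLinearMap = (ℝ ∙ u)ᗮ) {r : ℝ} (hr : 0 < r) {y : F}
    (hy : y ∈ tangentHemisphere u r) :
    hemisphereChart L u r (L† y) = y := by
  have hg := mapsTo_adjoint_tangentHemisphere hu hL hr hy
  rw [mem_closedBall_zero_iff] at hg
  rw [← map_adjoint_add_inner_smul hu hL y, map_add_smul_mem_tangentHemisphere_iff hu hL hr] at hy
  obtain ⟨hsphere, hheight⟩ := hy
  have hsqrt : √(r ^ 2 - ‖L† y‖ ^ 2) = r + ⟪u, y⟫ := by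
    rw [← hsphere, add_sub_cancel_left, Real.sqrt_sq hheight]
  rw [hemisphereChart_eq hr hg, hsqrt, add_sub_cancel_left, map_adjoint_add_inner_smul hu hL y]

theorem invOn_adjoint_hemisphereChart (hu : ‖u‖ = 1)
    (hL : LinearMap.range L.toLinearMap = (ℝ ∙ u)ᗮ) {r : ℝ} (hr : 0 < r) :
    Set.InvOn L† (hemisphereChart L u r) (closedBall 0 r) (tangentHemisphere u r) :=
  ⟨fun g _ => adjoint_hemisphereChart hL.le r g, fun _ hy => hemisphereChart_adjoint hu hL hr hy⟩

end

theorem sphere_chart_bijection_general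
    (p : ℕ)
    (ω₀ : EuclideanSpace ℝ (Fin p)) (hω₀ : ‖ω₀‖ = 1)
    (L : EuclideanSpace ℝ (Fin (p - 1)) →ₗᵢ[ℝ] EuclideanSpace ℝ (Fin p))
    (hL : LinearMap.range L.toLinearMap = (ℝ ∙ ω₀)ᗮ)
    (n : ℕ) (hn : 1 ≤ n)
    (h : EuclideanSpace ℝ (Fin (p - 1)) → EuclideanSpace ℝ (Fin p))
    (hdef : ∀ g₁, h g₁ =
      L g₁ - ((n : ℝ) * (1 - Real.sqrt (max (1 - ‖g₁‖ ^ 2 / (n : ℝ) ^ 2) 0))) • ω₀)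
    (A : Set (EuclideanSpace ℝ (Fin (p - 1))))
    (hA : A = {g₁ | ‖g₁‖ ≤ (n : ℝ)})
    (B : Set (EuclideanSpace ℝ (Fin p)))
    (hB : B = {h₃ | ‖ω₀ + ((n : ℝ))⁻¹ • h₃‖ = 1 ∧ ‖h₃‖ ≤ Real.sqrt 2 * (n : ℝ)}) :
    ContinuousOn h A ∧
    Set.MapsTo h A B ∧
    Set.BijOn h A B ∧
    Continuous (fun y => ContinuousLinearMap.adjoint L.toContinuousLinearMap y) ∧
    Set.BijOn (fun y => ContinuousLinearMap.adjoint L.toContinuousLinearMap y) B A ∧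
    Set.InvOn (fun y => ContinuousLinearMap.adjoint L.toContinuousLinearMap y) h A B := by
  have hr : (0 : ℝ) < n := by exact_mod_cast hn
  obtain rfl : h = hemisphereChart L ω₀ n := funext hdef
  obtain rfl : A = closedBall 0 n := hA.trans (Set.ext fun _ => mem_closedBall_zero_iff.symm)
  obtain rfl : B = tangentHemisphere ω₀ n := hB
  have hmaps := mapsTo_hemisphereChart hω₀ hL hr
  have hmaps_adjoint := mapsTo_adjoint_tangentHemisphere hω₀ hL hr
  have hinv := invOn_adjoint_hemisphereChart hω₀ hL hr
  exact ⟨(continuous_hemisphereChart L ω₀ n).continuousOn, hmaps,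
    hinv.bijOn hmaps hmaps_adjoint, (ContinuousLinearMap.adjoint _).continuous,
    hinv.symm.bijOn hmaps_adjoint hmaps, hinv⟩

/-- For `n ≥ 1`, the map
`h∗(g₁) = L g₁ − n(1 − √(max(1 − ‖g₁‖²/n², 0)))·ω₀` is a continuous bijection from
`A_n = {g₁ ∈ ℝ^{p−1} : ‖g₁‖ ≤ n}` onto
`B_n = {h₃ ∈ ℝ^p : ‖ω₀ + h₃/n‖ = 1, ‖h₃‖ ≤ √2·n}`, with continuous inverse given by
the adjoint `L*` of `L`, itself a bijection from `B_n` onto `A_n`. -/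
theorem sphere_chart_bijection
    (p : ℕ) (hp : 2 ≤ p)
    (ω₀ : EuclideanSpace ℝ (Fin p)) (hω₀ : ‖ω₀‖ = 1)
    (L : EuclideanSpace ℝ (Fin (p - 1)) →ₗᵢ[ℝ] EuclideanSpace ℝ (Fin p))
    (hL : LinearMap.range L.toLinearMap = (ℝ ∙ ω₀)ᗮ)
    (n : ℕ) (hn : 1 ≤ n)
    (h : EuclideanSpace ℝ (Fin (p - 1)) → EuclideanSpace ℝ (Fin p))
    (hdef : ∀ g₁, h g₁ =
      L g₁ - ((n : ℝ) * (1 - Real.sqrt (max (1 - ‖g₁‖ ^ 2 / (n : ℝ) ^ 2) 0))) • ω₀)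
    (A : Set (EuclideanSpace ℝ (Fin (p - 1))))
    (hA : A = {g₁ | ‖g₁‖ ≤ (n : ℝ)})
    (B : Set (EuclideanSpace ℝ (Fin p)))
    (hB : B = {h₃ | ‖ω₀ + ((n : ℝ))⁻¹ • h₃‖ = 1 ∧ ‖h₃‖ ≤ Real.sqrt 2 * (n : ℝ)}) :
    ContinuousOn h A ∧
    Set.MapsTo h A B ∧
    Set.BijOn h A B ∧
    Continuous (fun y => ContinuousLinearMap.adjoint L.toContinuousLinearMap y) ∧
    Set.BijOn (fun y => ContinuousLinearMap.adjoint L.toContinuousLinearMap y) B A ∧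
    Set.InvOn (fun y => ContinuousLinearMap.adjoint L.toContinuousLinearMap y) h A B :=
  sphere_chart_bijection_general p ω₀ hω₀ L hL n hn h hdef A hA B hB
end

section
/- As ν ↓ 0, the conditional law of the pair (ν^{−1}U, W) given the event {|U| ≤ ν} converges weakly to the product measure of the uniform distribution on [−1, 1] and G; in particular, in the limit the two components are independent, the first is uniform on [−1, 1], and the second has law G. -/
/-!
Let `r` be the Radon–Nikodym derivative of the law of `U` (`f` itself need not be measurable).
Since `f` is continuous at `0`, `r` is a.e. within `ε` of `f 0` near `0`. Disintegrating along `κ`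
and substituting `u = ν t`,
`E[g(ν⁻¹U, W) | |U| ≤ ν] = (∫_{[-1,1]} r(νt) dt)⁻¹ ∫_{[-1,1]} r(νt) ∫ g(t, w) dκ(νt)(w) dt`.
As `ν ↓ 0`, `r(ν ·) → f 0` in `L¹[-1, 1]` while the inner integral stays bounded by `‖g‖` and
converges pointwise to `∫ g(t, w) dG(w)`; so the numerator tends to `f 0 ∫∫ g(t, w) dG dt` and the
denominator to `2 f 0`.
-/

open MeasureTheory ProbabilityTheory Filter Topology Set
open scoped ProbabilityTheory ENNReal BoundedContinuousFunction

lemma setIntegral_Icc_neg_self_eq_mul (F : ℝ → ℝ) {ν : ℝ} (hν : 0 < ν) :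
    ∫ u in Icc (-ν) ν, F u = ν * ∫ t in Icc (-1 : ℝ) 1, F (ν * t) := by
  rw [integral_Icc_eq_integral_Ioc, integral_Icc_eq_integral_Ioc,
    ← intervalIntegral.integral_of_le (by linarith), ← intervalIntegral.integral_of_le (by norm_num),
    intervalIntegral.integral_comp_mul_left _ hν.ne', smul_eq_mul, mul_inv_cancel_left₀ hν.ne',
    mul_neg_one, mul_one]

lemma tendsto_integral_abs_of_eventually_ae_abs_le {ι α : Type*} [MeasurableSpace α]
    {μ : Measure α} [IsFiniteMeasure μ] {l : Filter ι} {F : ι → α → ℝ}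
    (hF : ∀ ε > 0, ∀ᶠ i in l, ∀ᵐ x ∂μ, |F i x| ≤ ε) :
    Tendsto (fun i => ∫ x, |F i x| ∂μ) l (𝓝 0) := by
  rw [Metric.tendsto_nhds]
  intro ε hε
  have hε' : 0 < ε / (μ.real univ + 1) := by positivity
  filter_upwards [hF _ hε'] with i hi
  have hle : ∫ x, |F i x| ∂μ ≤ μ.real univ * (ε / (μ.real univ + 1)) := by
    simpa using integral_mono_of_nonneg (ae_of_all _ fun x => abs_nonneg (F i x))
      (integrable_const _) hi
  rw [Real.dist_eq, sub_zero, abs_of_nonneg (integral_nonneg fun x => abs_nonneg _)]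
  calc _ ≤ _ := hle
    _ < ε := by
      rw [mul_div_assoc', div_lt_iff₀ (by positivity)]
      nlinarith [measureReal_nonneg (μ := μ) (s := univ)]

lemma tendsto_integral_mul_of_tendsto_integral_abs_sub {ι α : Type*} [MeasurableSpace α]
    {μ : Measure α} [IsFiniteMeasure μ] {l : Filter ι} [l.IsCountablyGenerated]
    {a b : ι → α → ℝ} {c C : ℝ} {b₀ : α → ℝ}
    (ha_int : ∀ᶠ i in l, Integrable (a i) μ)
    (ha : Tendsto (fun i => ∫ x, |a i x - c| ∂μ) l (𝓝 0))
    (hb_meas : ∀ i, AEStronglyMeasurable (b i) μ) (hb_bdd : ∀ i x, ‖b i x‖ ≤ C)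
    (hb : ∀ᵐ x ∂μ, Tendsto (fun i => b i x) l (𝓝 (b₀ x))) :
    Tendsto (fun i => ∫ x, a i x * b i x ∂μ) l (𝓝 (c * ∫ x, b₀ x ∂μ)) := by
  have hb_lim : Tendsto (fun i => ∫ x, b i x ∂μ) l (𝓝 (∫ x, b₀ x ∂μ)) :=
    tendsto_integral_filter_of_dominated_convergence (fun _ => C)
      (Eventually.of_forall hb_meas) (Eventually.of_forall fun i => ae_of_all _ (hb_bdd i))
      (integrable_const C) hb
  have herr : Tendsto (fun i => ∫ x, (a i x - c) * b i x ∂μ) l (𝓝 0) := by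
    refine squeeze_zero_norm' ?_ (by simpa using ha.const_mul C)
    filter_upwards [ha_int] with i hi
    calc ‖∫ x, (a i x - c) * b i x ∂μ‖ ≤ ∫ x, C * |a i x - c| ∂μ :=
          norm_integral_le_of_norm_le ((hi.sub (integrable_const c)).abs.const_mul C)
            (ae_of_all _ fun x => by
              rw [norm_mul, Real.norm_eq_abs, mul_comm]
              exact mul_le_mul_of_nonneg_right (hb_bdd i x) (abs_nonneg _))
      _ = C * ∫ x, |a i x - c| ∂μ := integral_const_mul C _
  rw [← zero_add (c * _)]
  refine (herr.add (hb_lim.const_mul c)).congr' ?_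
  filter_upwards [ha_int] with i hi
  rw [← integral_const_mul, ← integral_add]
  · simp only [sub_mul, sub_add_cancel]
  · exact (hi.sub (integrable_const c)).mul_bdd (hb_meas i) (ae_of_all _ (hb_bdd i))
  · exact ((integrable_const C).mono' (hb_meas i) (ae_of_all _ (hb_bdd i))).const_mul c

lemma ae_restrict_rnDeriv_withDensity_mem_Icc {α : Type*} [MeasurableSpace α]
    {μ ν : Measure α} [SigmaFinite μ] [SigmaFinite ν] {f : α → ℝ≥0∞}
    (hμ : μ = ν.withDensity f) {s : Set α} (hs : MeasurableSet s) {a b : ℝ≥0∞}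
    (hf : ∀ x ∈ s, f x ∈ Icc a b) :
    ∀ᵐ x ∂ν.restrict s, μ.rnDeriv ν x ∈ Icc a b := by
  have hμν : μ ≪ ν := hμ ▸ withDensity_absolutelyContinuous ν f
  have hsetL : ∀ t, MeasurableSet t →
      ∫⁻ x in t, μ.rnDeriv ν x ∂ν.restrict s = ∫⁻ x in t ∩ s, f x ∂ν := fun t ht => by
    rw [Measure.restrict_restrict ht, Measure.setLIntegral_rnDeriv hμν, hμ,
      withDensity_apply _ (ht.inter hs)]
  have hfs : ∀ t, MeasurableSet t → ∀ᵐ x ∂ν.restrict (t ∩ s), f x ∈ Icc a b := fun t ht =>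
    (ae_restrict_mem (ht.inter hs)).mono fun x hx => hf x hx.2
  have hlow : (fun _ => a) ≤ᵐ[ν.restrict s] μ.rnDeriv ν :=
    ae_le_of_forall_setLIntegral_le_of_sigmaFinite measurable_const fun t ht _ => by
      rw [hsetL t ht, Measure.restrict_restrict ht]
      exact lintegral_mono_ae ((hfs t ht).mono fun x hx => hx.1)
  have hup : μ.rnDeriv ν ≤ᵐ[ν.restrict s] fun _ => b :=
    ae_le_of_forall_setLIntegral_le_of_sigmaFinite (Measure.measurable_rnDeriv μ ν)
      fun t ht _ => by
        rw [hsetL t ht, Measure.restrict_restrict ht]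
        exact lintegral_mono_ae ((hfs t ht).mono fun x hx => hx.2)
  filter_upwards [hlow, hup] with x hlo hhi using ⟨hlo, hhi⟩

section DensityNearZero

variable {μ : Measure ℝ} [SigmaFinite μ] {f : ℝ → ℝ}

lemma exists_ae_abs_toReal_rnDeriv_sub_le
    (hμ : μ = volume.withDensity fun x => ENNReal.ofReal (f x)) (hf : ContinuousAt f 0)
    (hf0 : 0 ≤ f 0) {ε : ℝ} (hε : 0 < ε) :
    ∃ δ > 0, ∀ᵐ u, |u| < δ → |(μ.rnDeriv volume u).toReal - f 0| ≤ ε := by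
  obtain ⟨δ, hδ, hfδ⟩ := Metric.continuousAt_iff.mp hf ε hε
  refine ⟨δ, hδ, ?_⟩
  have hball : MeasurableSet (Metric.ball (0 : ℝ) δ) := Metric.isOpen_ball.measurableSet
  have hIcc := ae_restrict_rnDeriv_withDensity_mem_Icc hμ hball
    (a := ENNReal.ofReal (f 0 - ε)) (b := ENNReal.ofReal (f 0 + ε)) fun u hu => by
      have := abs_sub_lt_iff.mp (hfδ hu)
      exact ⟨ENNReal.ofReal_le_ofReal (by linarith), ENNReal.ofReal_le_ofReal (by linarith)⟩
  filter_upwards [(ae_restrict_iff' hball).mp hIcc, Measure.rnDeriv_lt_top μ volume]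
    with u hu hfin hδu
  obtain ⟨hlo, hhi⟩ := hu (by simpa using hδu)
  rw [abs_sub_le_iff]
  constructor
  · linarith [ENNReal.toReal_le_of_le_ofReal (by linarith) hhi]
  · linarith [(ENNReal.ofReal_le_iff_le_toReal hfin.ne).mp hlo]

lemma tendsto_integral_abs_toReal_rnDeriv_comp_mul_sub
    (hμ : μ = volume.withDensity fun x => ENNReal.ofReal (f x)) (hf : ContinuousAt f 0)
    (hf0 : 0 ≤ f 0) :
    Tendsto (fun ν => ∫ t in Icc (-1 : ℝ) 1, |(μ.rnDeriv volume (ν * t)).toReal - f 0|)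
      (𝓝[>] 0) (𝓝 0) := by
  refine tendsto_integral_abs_of_eventually_ae_abs_le fun ε hε => ?_
  obtain ⟨δ, hδ, hae⟩ := exists_ae_abs_toReal_rnDeriv_sub_le hμ hf hf0 hε
  filter_upwards [Ioo_mem_nhdsGT hδ] with ν hν
  have hscaled := (Measure.quasiMeasurePreserving_smul volume hν.1.ne').ae hae
  filter_upwards [ae_restrict_of_ae hscaled, ae_restrict_mem measurableSet_Icc] with t ht htI
  refine ht ?_
  rw [smul_eq_mul, abs_mul, abs_of_pos hν.1]
  nlinarith [hν.1, hν.2, abs_le.mpr htI]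

end DensityNearZero

lemma integral_cond_preimage_eq_of_map_eq_compProd {Ω α β : Type*} [MeasurableSpace Ω]
    [MeasurableSpace α] [MeasurableSpace β] {P : Measure Ω} [IsFiniteMeasure P]
    {X : Ω → α} {Y : Ω → β} (hX : Measurable X) (hY : Measurable Y)
    {κ : Kernel α β} [IsSFiniteKernel κ]
    (hκ : P.map (fun ω => (X ω, Y ω)) = P.map X ⊗ₘ κ) {s : Set α} (hs : MeasurableSet s)
    {F : α × β → ℝ} (hF : Integrable F (P.map X ⊗ₘ κ)) :
    ∫ ω, F (X ω, Y ω) ∂P[|X ⁻¹' s] =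
      ((P.map X).real s)⁻¹ * ∫ x in s, ∫ y, F (x, y) ∂κ x ∂P.map X := by
  have hpre : X ⁻¹' s = (fun ω => (X ω, Y ω)) ⁻¹' (s ×ˢ univ) := by
    rw [mk_preimage_prod, preimage_univ, inter_univ]
  rw [ProbabilityTheory.cond, integral_smul_measure, smul_eq_mul, ENNReal.toReal_inv,
    measureReal_def, Measure.map_apply hX hs, hpre,
    ← setIntegral_map (hs.prod .univ) ?_ (hX.prodMk hY).aemeasurable,
    hκ, Measure.setIntegral_compProd hs .univ hF.integrableOn]
  · simp only [Measure.restrict_univ]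
  · exact hκ ▸ hF.aestronglyMeasurable

section Rescaling

variable {E : Type*} [TopologicalSpace E] [MeasurableSpace E]

lemma integral_cond_abs_le_eq_div [OpensMeasurableSpace E] {Ω : Type*} [MeasurableSpace Ω]
    {P : Measure Ω} [IsFiniteMeasure P] {U : Ω → ℝ} {W : Ω → E}
    (hU : Measurable U) (hW : Measurable W) {κ : Kernel ℝ E} [IsMarkovKernel κ]
    (hκ : P.map (fun ω => (U ω, W ω)) = P.map U ⊗ₘ κ) (hac : P.map U ≪ volume)
    (g : ℝ × E →ᵇ ℝ) {ν : ℝ} (hν : 0 < ν) :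
    ∫ ω, g (ν⁻¹ * U ω, W ω) ∂P[|{ω | |U ω| ≤ ν}] =
      (∫ t in Icc (-1 : ℝ) 1, ((P.map U).rnDeriv volume (ν * t)).toReal)⁻¹ *
        ∫ t in Icc (-1 : ℝ) 1,
          ((P.map U).rnDeriv volume (ν * t)).toReal * ∫ w, g (t, w) ∂κ (ν * t) := by
  have hset : {ω | |U ω| ≤ ν} = U ⁻¹' Icc (-ν) ν := by ext; simp [abs_le]
  let gν : ℝ × E →ᵇ ℝ := g.compContinuous
    ⟨fun p => (ν⁻¹ * p.1, p.2), (continuous_const.mul continuous_fst).prodMk continuous_snd⟩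
  rw [hset, integral_cond_preimage_eq_of_map_eq_compProd hU hW hκ measurableSet_Icc
    (F := fun p => g (ν⁻¹ * p.1, p.2)) (gν.integrable _), ← Measure.setIntegral_toReal_rnDeriv hac,
    ← setIntegral_toReal_rnDeriv_mul hac measurableSet_Icc,
    setIntegral_Icc_neg_self_eq_mul _ hν, setIntegral_Icc_neg_self_eq_mul _ hν, mul_inv,
    mul_mul_mul_comm, inv_mul_cancel₀ hν.ne', one_mul]
  simp [inv_mul_cancel_left₀ hν.ne']

lemma tendsto_integral_kernel_comp_mul_nhdsGT {κ : Kernel ℝ E} {G : Measure E}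
    (hκG : ∀ g : E →ᵇ ℝ, Tendsto (fun u => ∫ x, g x ∂κ u) (𝓝 0) (𝓝 (∫ x, g x ∂G)))
    (g : ℝ × E →ᵇ ℝ) (t : ℝ) :
    Tendsto (fun ν => ∫ w, g (t, w) ∂κ (ν * t)) (𝓝[>] 0) (𝓝 (∫ w, g (t, w) ∂G)) :=
  (hκG (g.compContinuous ⟨(t, ·), by fun_prop⟩)).comp
    (tendsto_nhdsWithin_of_tendsto_nhds (by simpa using (continuous_mul_const t).tendsto 0))

lemma tendsto_integral_rnDeriv_mul_integral_kernel_comp_mul [OpensMeasurableSpace E]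
    {μ : Measure ℝ} [IsFiniteMeasure μ] {f : ℝ → ℝ}
    (hμ : μ = volume.withDensity fun x => ENNReal.ofReal (f x)) (hf : ContinuousAt f 0)
    (hf0 : 0 ≤ f 0) {κ : Kernel ℝ E} [IsMarkovKernel κ] {G : Measure E}
    (hκG : ∀ g : E →ᵇ ℝ, Tendsto (fun u => ∫ x, g x ∂κ u) (𝓝 0) (𝓝 (∫ x, g x ∂G)))
    (g : ℝ × E →ᵇ ℝ) :
    Tendsto (fun ν => ∫ t in Icc (-1 : ℝ) 1,
        (μ.rnDeriv volume (ν * t)).toReal * ∫ w, g (t, w) ∂κ (ν * t))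
      (𝓝[>] 0) (𝓝 (f 0 * ∫ t in Icc (-1 : ℝ) 1, ∫ w, g (t, w) ∂G)) := by
  have hr_int : ∀ᶠ ν in 𝓝[>] (0 : ℝ), Integrable
      (fun t => (μ.rnDeriv volume (ν * t)).toReal) (volume.restrict (Icc (-1) 1)) := by
    filter_upwards [self_mem_nhdsWithin] with ν hν
    exact (Measure.integrable_toReal_rnDeriv.comp_mul_left' (ne_of_gt hν)).integrableOn
  refine tendsto_integral_mul_of_tendsto_integral_abs_sub (C := ‖g‖) hr_int
    (tendsto_integral_abs_toReal_rnDeriv_comp_mul_sub hμ hf hf0)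
    (fun ν => (g.continuous.stronglyMeasurable.integral_kernel_prod_right'
      (κ := κ.comap (ν * ·) (measurable_const_mul ν))).aestronglyMeasurable)
    (fun ν t => ?_) (ae_of_all _ (tendsto_integral_kernel_comp_mul_nhdsGT hκG g))
  simpa using norm_integral_le_of_norm_le_const (μ := κ (ν * t))
    (ae_of_all _ fun w => g.norm_coe_le_norm (t, w))

end Rescaling

theorem conditional_law_near_zero_tendsto_uniform_prod_general
    (m : ℕ) {Ω : Type*} [MeasurableSpace Ω]
    (P : Measure Ω) [IsProbabilityMeasure P]
    (U : Ω → ℝ) (W : Ω → EuclideanSpace ℝ (Fin m))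
    (hU : Measurable U) (hW : Measurable W)
    (f : ℝ → ℝ)
    (hfdens : Measure.map U P = volume.withDensity fun x => ENNReal.ofReal (f x))
    (hfcont : ContinuousAt f 0) (hfpos : 0 < f 0)
    (κ : Kernel ℝ (EuclideanSpace ℝ (Fin m))) [IsMarkovKernel κ]
    (hκ : Measure.map (fun ω => (U ω, W ω)) P = (Measure.map U P) ⊗ₘ κ)
    (G : Measure (EuclideanSpace ℝ (Fin m))) [IsProbabilityMeasure G]
    (hκG : ∀ g : BoundedContinuousFunction (EuclideanSpace ℝ (Fin m)) ℝ,
      Tendsto (fun u : ℝ => ∫ x, g x ∂(κ u)) (𝓝 0) (𝓝 (∫ x, g x ∂G))) :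
    ∀ g : BoundedContinuousFunction (ℝ × EuclideanSpace ℝ (Fin m)) ℝ,
      Tendsto (fun ν : ℝ => ∫ ω, g (ν⁻¹ * U ω, W ω) ∂(P[|{ω | |U ω| ≤ ν}]))
        (𝓝[>] 0)
        (𝓝 (∫ x, g x
          ∂(((2⁻¹ : ℝ≥0∞) • volume.restrict (Set.Icc (-1 : ℝ) 1)).prod G))) := by
  intro g
  have : IsProbabilityMeasure (P.map U) := Measure.isProbabilityMeasure_map hU.aemeasurable
  have hac : P.map U ≪ volume := hfdens ▸ withDensity_absolutelyContinuous _ _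
  have hlim := tendsto_integral_rnDeriv_mul_integral_kernel_comp_mul hfdens hfcont hfpos.le hκG
  have hmass : Tendsto (fun ν => ∫ t in Icc (-1 : ℝ) 1, ((P.map U).rnDeriv volume (ν * t)).toReal)
      (𝓝[>] 0) (𝓝 (f 0 * 2)) := by
    simpa [one_add_one_eq_two] using hlim 1
  rw [Measure.prod_smul_left, integral_smul_measure, integral_prod _ (g.integrable _)]
  convert ((hmass.inv₀ (by positivity)).mul (hlim g)).congr' ?_ using 2
  · simp
    field_simp
  filter_upwards [self_mem_nhdsWithin] with ν hν
  exact (integral_cond_abs_le_eq_div hU hW hκ hac g hν).symm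

/-- Let `U` be real-valued with density `f` (continuous at `0`, `f(0) > 0`), `W` a random
vector in `ℝ^m`, and `κ` a regular conditional distribution of `W` given `U` with
`κ(u) → G` weakly as `u → 0`.  Then, as `ν ↓ 0`, the conditional law of `(ν⁻¹U, W)`
given `{|U| ≤ ν}` converges weakly to the product of the uniform distribution on
`[−1, 1]` and `G`. -/
theorem conditional_law_near_zero_tendsto_uniform_prod
    (m : ℕ) (hm : 1 ≤ m) {Ω : Type*} [MeasurableSpace Ω]
    (P : Measure Ω) [IsProbabilityMeasure P]
    (U : Ω → ℝ) (W : Ω → EuclideanSpace ℝ (Fin m))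
    (hU : Measurable U) (hW : Measurable W)
    (f : ℝ → ℝ) (hfnn : ∀ x, 0 ≤ f x)
    (hfdens : Measure.map U P = volume.withDensity fun x => ENNReal.ofReal (f x))
    (hfcont : ContinuousAt f 0) (hfpos : 0 < f 0)
    (κ : Kernel ℝ (EuclideanSpace ℝ (Fin m))) [IsMarkovKernel κ]
    (hκ : Measure.map (fun ω => (U ω, W ω)) P = (Measure.map U P) ⊗ₘ κ)
    (G : Measure (EuclideanSpace ℝ (Fin m))) [IsProbabilityMeasure G]
    (hκG : ∀ g : BoundedContinuousFunction (EuclideanSpace ℝ (Fin m)) ℝ,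
      Tendsto (fun u : ℝ => ∫ x, g x ∂(κ u)) (𝓝 0) (𝓝 (∫ x, g x ∂G))) :
    ∀ g : BoundedContinuousFunction (ℝ × EuclideanSpace ℝ (Fin m)) ℝ,
      Tendsto (fun ν : ℝ => ∫ ω, g (ν⁻¹ * U ω, W ω) ∂(P[|{ω | |U ω| ≤ ν}]))
        (𝓝[>] 0)
        (𝓝 (∫ x, g x
          ∂(((2⁻¹ : ℝ≥0∞) • volume.restrict (Set.Icc (-1 : ℝ) 1)).prod G))) :=
  conditional_law_near_zero_tendsto_uniform_prod_general m P U W hU hW f hfdens hfcont hfpos κ hκ G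
    hκG
end

section
/- If f₀ is continuous at a point u ∈ ℝ, then f_n(u) → f₀(u) as n → ∞. -/
/-!
Write `ψ_η(t) = η⁻¹ φ((u - t) / η)`. Integrating by parts (Fubini on `ψ_η(t) = -∫_{s ≥ t} ψ_η'`),
`f_n(u) - ∫ ψ_η f₀ = -∫ (F_n - F₀) ψ_η'`, and `∫ |ψ_η'| = η⁻¹ ∫ |φ'|`, so the difference is at most
`(ε_n / η_n) ∫ |φ'| → 0`. Finally the rescaled Gaussians are peak functions, so `∫ ψ_η f₀ → f₀(u)`
at a point of continuity of the integrable `f₀`.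
-/

open MeasureTheory Filter Topology Set ProbabilityTheory

theorem MeasureTheory.Integrable.abs_setIntegral_le_integral_abs {α : Type*}
    [MeasurableSpace α] {μ : Measure α} {f : α → ℝ} (hf : Integrable f μ) (s : Set α) :
    |∫ x in s, f x ∂μ| ≤ ∫ x, |f x| ∂μ :=
  abs_integral_le_integral_abs.trans
    (setIntegral_le_integral hf.abs (ae_of_all _ fun _ => abs_nonneg _))

theorem abs_sub_le_ciSup_abs_sub {ι : Type*} {G H : ι → ℝ} {C D : ℝ} (hG : ∀ i, |G i| ≤ C)
    (hH : ∀ i, |H i| ≤ D) (i : ι) : |G i - H i| ≤ ⨆ j, |G j - H j| :=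
  le_ciSup (f := fun j => |G j - H j|)
    ⟨C + D, by rintro _ ⟨j, rfl⟩; exact (abs_sub _ _).trans (add_le_add (hG j) (hH j))⟩ i

theorem MeasureTheory.Integrable.continuous_setIntegral_Iic {f : ℝ → ℝ} (hf : Integrable f) :
    Continuous fun x => ∫ t in Iic x, f t := by
  refine ((continuous_const (y := ∫ t in Iic 0, f t)).add (hf.continuous_primitive 0)).congr
    fun x => ?_
  rw [Pi.add_apply, ← intervalIntegral.integral_Iic_sub_Iic hf.integrableOn hf.integrableOn,
    add_sub_cancel]

section IntegrationByParts

variable {ψ ψ' : ℝ → ℝ}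

theorem eq_neg_setIntegral_Ici_of_hasDerivAt (hψ : ∀ x, HasDerivAt ψ (ψ' x) x)
    (hψ' : Integrable ψ') (hψtop : Tendsto ψ atTop (𝓝 0)) (t : ℝ) :
    ψ t = -∫ s in Ici t, ψ' s := by
  rw [integral_Ici_eq_integral_Ioi,
    integral_Ioi_of_hasDerivAt_of_tendsto' (fun x _ => hψ x) hψ'.integrableOn hψtop]
  ring

theorem integral_mul_eq_neg_integral_setIntegral_Iic_mul {μ : Measure ℝ} [SFinite μ]
    {h : ℝ → ℝ} (hh : Integrable h μ) (hψ : ∀ x, HasDerivAt ψ (ψ' x) x)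
    (hψ' : Integrable ψ') (hψtop : Tendsto ψ atTop (𝓝 0)) :
    ∫ t, ψ t * h t ∂μ = -∫ s, ψ' s * ∫ t in Iic s, h t ∂μ := by
  set Φ : ℝ × ℝ → ℝ := {z | z.1 ≤ z.2}.indicator fun z => ψ' z.2 * h z.1
  have hΦ : Integrable Φ (μ.prod volume) :=
    (hh.mul_prod hψ').indicator (measurableSet_le measurable_fst measurable_snd) |>.congr
      (ae_of_all _ fun z => by simp only [Φ, mul_comm])
  have hΦ_left (t : ℝ) : ∫ s, Φ (t, s) = (∫ s in Ici t, ψ' s) * h t := by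
    rw [← integral_mul_const, ← integral_indicator measurableSet_Ici]
    congr 1
  have hΦ_right (s : ℝ) : ∫ t, Φ (t, s) ∂μ = ψ' s * ∫ t in Iic s, h t ∂μ := by
    rw [← integral_const_mul, ← integral_indicator measurableSet_Iic]
    congr 1
  calc ∫ t, ψ t * h t ∂μ = -∫ t, (∫ s, Φ (t, s)) ∂μ := by
        simp_rw [hΦ_left, eq_neg_setIntegral_Ici_of_hasDerivAt hψ hψ' hψtop, neg_mul,
          integral_neg]
    _ = -∫ s, ψ' s * ∫ t in Iic s, h t ∂μ := by
        rw [integral_integral_swap (f := fun t s => Φ (t, s)) hΦ]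
        simp_rw [hΦ_right]

theorem StieltjesFunction.integral_eq_neg_integral_deriv_mul (F : StieltjesFunction ℝ) {C : ℝ}
    (hF : ∀ x, |F x| ≤ C) (hψ : ∀ x, HasDerivAt ψ (ψ' x) x) (hψint : Integrable ψ)
    (hψ' : Integrable ψ') :
    ∫ t, ψ t ∂F.measure = -∫ s, ψ' s * F s := by
  have := F.isFiniteMeasure_of_forall_abs_le hF
  have hψbot := tendsto_zero_of_hasDerivAt_of_integrableOn_Iic (a := 0) (fun x _ => hψ x)
    hψ'.integrableOn hψint.integrableOn
  have hψtop := tendsto_zero_of_hasDerivAt_of_integrableOn_Ioi (a := 0) (fun x _ => hψ x)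
    hψ'.integrableOn hψint.integrableOn
  have hFbdd : BddBelow (range F) := ⟨-C, by rintro _ ⟨x, rfl⟩; exact neg_le_of_abs_le (hF x)⟩
  have hF_Iic (s : ℝ) : F.measure.real (Iic s) = F s - ⨅ x, F x := by
    rw [measureReal_def, F.measure_Iic (tendsto_atBot_ciInf F.mono hFbdd), ENNReal.toReal_ofReal]
    exact sub_nonneg.2 (ciInf_le hFbdd s)
  have hψ'F : Integrable fun s => ψ' s * F s :=
    hψ'.mul_bdd F.mono.measurable.aestronglyMeasurable (ae_of_all _ hF)
  calc ∫ t, ψ t ∂F.measure = -∫ s, ψ' s * (F s - ⨅ x, F x) := by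
        simpa [hF_Iic] using integral_mul_eq_neg_integral_setIntegral_Iic_mul
          (integrable_const (μ := F.measure) (1 : ℝ)) hψ hψ' hψtop
    _ = -∫ s, ψ' s * F s := by
        simp_rw [mul_sub]
        rw [integral_sub hψ'F (hψ'.mul_const _), integral_mul_const,
          integral_of_hasDerivAt_of_tendsto hψ hψ' hψbot hψtop]
        simp

theorem abs_integral_stieltjes_sub_integral_mul_le (F : StieltjesFunction ℝ) {C : ℝ}
    (hF : ∀ x, |F x| ≤ C) {f : ℝ → ℝ} (hf : Integrable f) {ε : ℝ}
    (hε : ∀ x, |F x - ∫ t in Iic x, f t| ≤ ε) (hψ : ∀ x, HasDerivAt ψ (ψ' x) x)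
    (hψint : Integrable ψ) (hψ' : Integrable ψ') :
    |∫ t, ψ t ∂F.measure - ∫ t, ψ t * f t| ≤ ε * ∫ s, |ψ' s| := by
  have hψtop := tendsto_zero_of_hasDerivAt_of_integrableOn_Ioi (a := 0) (fun x _ => hψ x)
    hψ'.integrableOn hψint.integrableOn
  have hψ'F : Integrable fun s => ψ' s * F s :=
    hψ'.mul_bdd F.mono.measurable.aestronglyMeasurable (ae_of_all _ hF)
  have hψ'F₀ : Integrable fun s => ψ' s * ∫ t in Iic s, f t :=
    hψ'.mul_bdd hf.continuous_setIntegral_Iic.aestronglyMeasurable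
      (ae_of_all _ fun s => hf.abs_setIntegral_le_integral_abs _)
  rw [F.integral_eq_neg_integral_deriv_mul hF hψ hψint hψ',
    integral_mul_eq_neg_integral_setIntegral_Iic_mul hf hψ hψ' hψtop, neg_sub_neg,
    ← integral_sub hψ'F₀ hψ'F, ← integral_const_mul, ← Real.norm_eq_abs]
  refine norm_integral_le_of_norm_le (hψ'.abs.const_mul ε) (ae_of_all _ fun s => ?_)
  rw [← mul_sub, Real.norm_eq_abs, abs_mul, abs_sub_comm, mul_comm]
  exact mul_le_mul_of_nonneg_right (hε s) (abs_nonneg _)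

end IntegrationByParts

section RescaledKernel

variable {g g' : ℝ → ℝ} {c : ℝ}

def rescaledKernel (g : ℝ → ℝ) (c u t : ℝ) : ℝ := c * g (c * (u - t))

theorem hasDerivAt_rescaledKernel (hg : ∀ x, HasDerivAt g (g' x) x) (c u t : ℝ) :
    HasDerivAt (rescaledKernel g c u) (-(c ^ 2 * g' (c * (u - t)))) t := by
  have hin : HasDerivAt (fun t => c * (u - t)) (-c) t := by
    simpa using ((hasDerivAt_id t).const_sub u).const_mul c
  exact ((hg _).comp t hin).const_mul c |>.congr_deriv (by ring)

theorem integrable_rescaledKernel (hg : Integrable g) (hc : c ≠ 0) (u : ℝ) :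
    Integrable (rescaledKernel g c u) :=
  ((hg.comp_mul_left' hc).comp_sub_left u).const_mul c

theorem integral_abs_deriv_rescaledKernel (hc : 0 < c) (u : ℝ) :
    ∫ t, |-(c ^ 2 * g' (c * (u - t)))| = c * ∫ x, |g' x| := by
  simp_rw [abs_neg, abs_mul, abs_of_pos (pow_pos hc 2)]
  rw [integral_const_mul, integral_sub_left_eq_self (fun t => |g' (c * t)|),
    Measure.integral_comp_mul_left (fun x => |g' x|), abs_of_pos (inv_pos.2 hc), smul_eq_mul]
  field_simp

theorem abs_integral_rescaledKernel_stieltjes_sub_le (F : StieltjesFunction ℝ) {C : ℝ}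
    (hF : ∀ x, |F x| ≤ C) {f : ℝ → ℝ} (hf : Integrable f) {ε : ℝ}
    (hε : ∀ x, |F x - ∫ t in Iic x, f t| ≤ ε) (hg : ∀ x, HasDerivAt g (g' x) x)
    (hgint : Integrable g) (hg' : Integrable g') (hc : 0 < c) (u : ℝ) :
    |∫ t, rescaledKernel g c u t ∂F.measure - ∫ t, rescaledKernel g c u t * f t| ≤
      ε * (c * ∫ x, |g' x|) := by
  rw [← integral_abs_deriv_rescaledKernel hc u]
  exact abs_integral_stieltjes_sub_integral_mul_le F hF hf hε (hasDerivAt_rescaledKernel hg c u)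
    (integrable_rescaledKernel hgint hc.ne' u)
    (((hg'.comp_mul_left' hc.ne').comp_sub_left u).const_mul (c ^ 2)).neg

theorem tendsto_integral_rescaledKernel_mul (hg : ∀ x, 0 ≤ g x) (hg_one : ∫ x, g x = 1)
    (hg_decay : Tendsto (fun x => |x| * g x) (cocompact ℝ) (𝓝 0)) {f : ℝ → ℝ}
    (hf : Integrable f) {u : ℝ} (hu : ContinuousAt f u) :
    Tendsto (fun c => ∫ t, rescaledKernel g c u t * f t) atTop (𝓝 (f u)) := by
  have hg_decay' : Tendsto (fun x : ℝ => ‖x‖ ^ Module.finrank ℝ ℝ * g x) (Bornology.cobounded ℝ)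
      (𝓝 0) := by
    simpa [Metric.cobounded_eq_cocompact] using hg_decay
  simpa [rescaledKernel] using tendsto_integral_comp_smul_smul_of_integrable' hg hg_one hg_decay'
    hf hu

end RescaledKernel

section Gaussian

theorem gaussianPDFReal_zero_one_apply (x : ℝ) :
    gaussianPDFReal 0 1 x = (Real.sqrt (2 * Real.pi))⁻¹ * Real.exp (-x ^ 2 / 2) := by
  simp [gaussianPDFReal]

theorem hasDerivAt_gaussianPDFReal_zero_one (x : ℝ) :
    HasDerivAt (gaussianPDFReal 0 1) (-(x * gaussianPDFReal 0 1 x)) x := by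
  have h : HasDerivAt (fun y : ℝ => -y ^ 2 / 2) (-x) x :=
    ((hasDerivAt_pow 2 x).neg.div_const 2).congr_deriv (by norm_num; ring)
  rw [funext gaussianPDFReal_zero_one_apply]
  exact (h.exp.const_mul _).congr_deriv (by ring)

theorem integrable_mul_gaussianPDFReal_zero_one :
    Integrable fun x => x * gaussianPDFReal 0 1 x := by
  convert (integrable_mul_exp_neg_mul_sq (b := 1 / 2) (by norm_num)).const_mul
    (Real.sqrt (2 * Real.pi))⁻¹ using 2 with x
  rw [gaussianPDFReal_zero_one_apply]; ring_nf

theorem tendsto_abs_mul_gaussianPDFReal_zero_one_cocompact :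
    Tendsto (fun x => |x| * gaussianPDFReal 0 1 x) (cocompact ℝ) (𝓝 0) := by
  convert ((tendsto_rpow_abs_mul_exp_neg_mul_sq_cocompact (a := 1 / 2) (by norm_num) 1).const_mul
    (Real.sqrt (2 * Real.pi))⁻¹) using 2 with x
  · rw [gaussianPDFReal_zero_one_apply, Real.rpow_one]; ring_nf
  · simp

end Gaussian

theorem kernel_density_estimate_tendsto_of_continuousAt_general
    (f₀ : ℝ → ℝ)
    (hf₀int : Integrable f₀)
    (F₀ : ℝ → ℝ) (hF₀ : ∀ t, F₀ t = ∫ s in Set.Iic t, f₀ s)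
    (F : ℕ → StieltjesFunction ℝ)
    (hFbdd : ∀ n, ∃ C, ∀ t, |F n t| ≤ C)
    (η : ℕ → ℝ) (hηpos : ∀ n, 0 < η n)
    (hη0 : Tendsto η atTop (𝓝 0))
    (hε : Tendsto (fun n => (⨆ t, |F n t - F₀ t|) / η n) atTop (𝓝 0))
    (φ : ℝ → ℝ) (hφ : ∀ x, φ x = (Real.sqrt (2 * Real.pi))⁻¹ * Real.exp (-x ^ 2 / 2))
    (fn : ℕ → ℝ → ℝ)
    (hfn : ∀ n u, fn n u = ∫ t, (η n)⁻¹ * φ ((u - t) / η n) ∂(F n).measure)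
    (u : ℝ) (hcont : ContinuousAt f₀ u) :
    Tendsto (fun n => fn n u) atTop (𝓝 (f₀ u)) := by
  obtain rfl : φ = gaussianPDFReal 0 1 := funext fun x => by
    rw [hφ, gaussianPDFReal_zero_one_apply]
  set K := ∫ x, |-(x * gaussianPDFReal 0 1 x)|
  have hc : Tendsto (fun n => (η n)⁻¹) atTop atTop :=
    tendsto_inv_nhdsGT_zero.comp (tendsto_nhdsWithin_iff.2 ⟨hη0, Eventually.of_forall hηpos⟩)
  have hsmooth := (tendsto_integral_rescaledKernel_mul (gaussianPDFReal_nonneg 0 1)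
    (integral_gaussianPDFReal_eq_one 0 one_ne_zero)
    tendsto_abs_mul_gaussianPDFReal_zero_one_cocompact hf₀int hcont).comp hc
  have hbound (n : ℕ) : ‖fn n u - ∫ t, rescaledKernel (gaussianPDFReal 0 1) (η n)⁻¹ u t * f₀ t‖
      ≤ (⨆ t, |F n t - F₀ t|) / η n * K := by
    obtain ⟨C, hC⟩ := hFbdd n
    have hsup (x : ℝ) : |F n x - ∫ t in Iic x, f₀ t| ≤ ⨆ t, |F n t - F₀ t| := by
      rw [← hF₀]
      exact abs_sub_le_ciSup_abs_sub hC
        (fun t => hF₀ t ▸ hf₀int.abs_setIntegral_le_integral_abs _) x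
    calc _ ≤ (⨆ t, |F n t - F₀ t|) * ((η n)⁻¹ * K) := by
          rw [Real.norm_eq_abs, hfn]
          simpa only [rescaledKernel, div_eq_inv_mul] using
            abs_integral_rescaledKernel_stieltjes_sub_le (F n) hC hf₀int hsup
            hasDerivAt_gaussianPDFReal_zero_one (integrable_gaussianPDFReal 0 1)
            integrable_mul_gaussianPDFReal_zero_one.neg (inv_pos.2 (hηpos n)) u
      _ = _ := by ring
  have hdiff := squeeze_zero_norm hbound (by simpa using hε.mul_const K)
  simpa using hdiff.add hsmooth

/-- Kernel density estimation: if `F_n → F₀` uniformly at rate `ε_n` with bandwidths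
`η_n → 0` and `ε_n/η_n → 0`, and `f₀` is continuous at `u`, then the Gaussian kernel
density estimates satisfy `f_n(u) → f₀(u)`. -/
theorem kernel_density_estimate_tendsto_of_continuousAt
    (f₀ : ℝ → ℝ) (hf₀nn : ∀ x, 0 ≤ f₀ x)
    (M : ℝ) (hf₀bdd : ∀ x, f₀ x ≤ M)
    (hf₀int : Integrable f₀) (hf₀prob : ∫ x, f₀ x = 1)
    (F₀ : ℝ → ℝ) (hF₀ : ∀ t, F₀ t = ∫ s in Set.Iic t, f₀ s)
    (F : ℕ → StieltjesFunction ℝ)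
    (hFbdd : ∀ n, ∃ C, ∀ t, |F n t| ≤ C)
    (η : ℕ → ℝ) (hηpos : ∀ n, 0 < η n)
    (hη0 : Tendsto η atTop (𝓝 0))
    (hε : Tendsto (fun n => (⨆ t, |F n t - F₀ t|) / η n) atTop (𝓝 0))
    (φ : ℝ → ℝ) (hφ : ∀ x, φ x = (Real.sqrt (2 * Real.pi))⁻¹ * Real.exp (-x ^ 2 / 2))
    (fn : ℕ → ℝ → ℝ)
    (hfn : ∀ n u, fn n u = ∫ t, (η n)⁻¹ * φ ((u - t) / η n) ∂(F n).measure)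
    (u : ℝ) (hcont : ContinuousAt f₀ u) :
    Tendsto (fun n => fn n u) atTop (𝓝 (f₀ u)) :=
  kernel_density_estimate_tendsto_of_continuousAt_general f₀ hf₀int F₀ hF₀ F hFbdd η hηpos hη0 hε φ
    hφ fn hfn u hcont
end

section
/- If f₀ is uniformly continuous on ℝ, then sup_{u ∈ ℝ} |f_n(u) − f₀(u)| → 0 as n → ∞. -/
/-!
Integrating by parts against `dF_n`, with the rescaled Gaussian `k(t) = η⁻¹ φ((u - t) / η)`,
gives `f_n(u) = -∫ F_n k'`, and likewise `∫ k f₀ = -∫ F₀ k'`. Hence `f_n(u)` differs from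
`∫ φ(x) f₀(u - η x) dx` by at most `ε_n ‖k'‖₁ = (ε_n / η_n) ‖φ'‖₁`, uniformly in `u`. Since `φ`
is an approximate identity and `f₀` is bounded and uniformly continuous, the latter converges
to `f₀` uniformly as `η → 0`.
-/

open MeasureTheory Filter Topology Set ProbabilityTheory

lemma hasDerivAt_gaussianPDFReal (μ : ℝ) (v : NNReal) (x : ℝ) :
    HasDerivAt (gaussianPDFReal μ v) (-((x - μ) / v) * gaussianPDFReal μ v x) x := by
  have h : HasDerivAt (fun x => -(x - μ) ^ 2 / (2 * v)) (-(2 * (x - μ)) / (2 * v)) x := by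
    simpa using (((hasDerivAt_id x).sub_const μ).pow 2).neg.div_const (2 * (v : ℝ))
  rw [gaussianPDFReal_def]
  exact (h.exp.const_mul (√(2 * Real.pi * v))⁻¹).congr_deriv (by ring)

lemma integrable_sub_mul_gaussianPDFReal (μ : ℝ) (v : NNReal) :
    Integrable fun x => (x - μ) * gaussianPDFReal μ v x := by
  rcases eq_or_ne v 0 with rfl | hv
  · simp
  refine ((((integrable_mul_exp_neg_mul_sq (b := (2 * v : ℝ)⁻¹) (by positivity)).comp_sub_right
    μ).const_mul (√(2 * Real.pi * v))⁻¹).congr (ae_of_all _ fun x => ?_))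
  simp only [gaussianPDFReal]
  ring_nf

section IntegrationByParts

variable {k k' : ℝ → ℝ}

/-- `k t = -∫ s in Ici t, k' s`, then Fubini over `{(t, s) | t ≤ s}`. -/
theorem integral_eq_neg_integral_measureReal_Iic_mul (μ : Measure ℝ) [IsFiniteMeasure μ]
    (hk : ∀ x, HasDerivAt k (k' x) x) (hk' : Integrable k') (hk_top : Tendsto k atTop (𝓝 0)) :
    ∫ t, k t ∂μ = -∫ s, μ.real (Iic s) * k' s := by
  set P : ℝ × ℝ → ℝ := {p | p.1 ≤ p.2}.indicator fun p => k' p.2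
  have hP : Integrable P (μ.prod volume) :=
    (hk'.comp_snd μ).indicator (measurableSet_le measurable_fst measurable_snd)
  have hk_eq (t : ℝ) : k t = -∫ s, P (t, s) := by
    have hP_t : (fun s => P (t, s)) = (Ici t).indicator k' := by
      ext s; simp [P, indicator]
    rw [hP_t, integral_indicator measurableSet_Ici, integral_Ici_eq_integral_Ioi,
      integral_Ioi_of_hasDerivAt_of_tendsto' (fun x _ => hk x) hk'.integrableOn hk_top]
    ring
  have hP_eq (s : ℝ) : ∫ t, P (t, s) ∂μ = μ.real (Iic s) * k' s := by
    have hP_s : (fun t => P (t, s)) = (Iic s).indicator fun _ => k' s := by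
      ext t; simp [P, indicator]
    rw [hP_s, integral_indicator measurableSet_Iic, setIntegral_const, smul_eq_mul]
  calc ∫ t, k t ∂μ = -∫ t, (∫ s, P (t, s)) ∂μ := by simp_rw [hk_eq, integral_neg]
    _ = -∫ s, μ.real (Iic s) * k' s := by
      rw [integral_integral_swap (f := fun t s => P (t, s)) hP]; simp_rw [hP_eq]

theorem StieltjesFunction.integral_eq_neg_integral_mul_deriv (F : StieltjesFunction ℝ) {C : ℝ}
    (hF : ∀ t, |F t| ≤ C) (hk : ∀ x, HasDerivAt k (k' x) x) (hk_int : Integrable k)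
    (hk' : Integrable k') :
    ∫ t, k t ∂F.measure = -∫ s, F s * k' s := by
  have := F.isFiniteMeasure_of_forall_abs_le hF
  have hbdd : BddBelow (range F) := ⟨-C, by rintro _ ⟨t, rfl⟩; exact neg_le_of_abs_le (hF t)⟩
  have hl : Tendsto F atBot (𝓝 (⨅ t, F t)) := tendsto_atBot_ciInf F.mono hbdd
  -- the offset `⨅ t, F t` drops out because `∫ k' = 0`
  have hF_Iic (s : ℝ) : F.measure.real (Iic s) = F s - ⨅ t, F t := by
    rw [measureReal_def, F.measure_Iic hl, ENNReal.toReal_ofReal (sub_nonneg.2 (ciInf_le hbdd s))]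
  have hFk' : Integrable fun s => F s * k' s :=
    hk'.bdd_mul F.mono.measurable.aestronglyMeasurable (ae_of_all _ hF)
  rw [integral_eq_neg_integral_measureReal_Iic_mul _ hk hk'
      (tendsto_zero_of_hasDerivAt_of_integrableOn_Ioi (a := 0) (fun x _ => hk x)
        hk'.integrableOn hk_int.integrableOn)]
  simp_rw [hF_Iic, sub_mul]
  rw [integral_sub hFk' (hk'.const_mul _), integral_const_mul,
    integral_eq_zero_of_hasDerivAt_of_integrable hk hk' hk_int, mul_zero, sub_zero]

variable {f : ℝ → ℝ}

lemma monotone_setIntegral_Iic (hf_nn : ∀ x, 0 ≤ f x) (hf : Integrable f) :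
    Monotone fun s => ∫ r in Iic s, f r := fun _ _ hab =>
  setIntegral_mono_set hf.integrableOn (ae_of_all _ hf_nn) (Iic_subset_Iic.2 hab).eventuallyLE

lemma abs_setIntegral_Iic_le (hf_nn : ∀ x, 0 ≤ f x) (hf : Integrable f) (s : ℝ) :
    |∫ r in Iic s, f r| ≤ ∫ r, f r := by
  rw [abs_of_nonneg (setIntegral_nonneg measurableSet_Iic fun x _ => hf_nn x)]
  exact setIntegral_le_integral hf (ae_of_all _ hf_nn)

theorem integral_mul_eq_neg_integral_setIntegral_Iic_mul_s17 (hf_nn : ∀ x, 0 ≤ f x)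
    (hf : Integrable f) (hk : ∀ x, HasDerivAt k (k' x) x) (hk' : Integrable k')
    (hk_top : Tendsto k atTop (𝓝 0)) :
    ∫ t, k t * f t = -∫ s, (∫ r in Iic s, f r) * k' s := by
  set μ := volume.withDensity fun t => ENNReal.ofReal (f t)
  have := isFiniteMeasure_withDensity_ofReal hf.2
  have hμ_Iic (s : ℝ) : μ.real (Iic s) = ∫ r in Iic s, f r := by
    rw [measureReal_def, withDensity_apply _ measurableSet_Iic,
      ← ofReal_integral_eq_lintegral_ofReal hf.integrableOn (ae_of_all _ hf_nn),
      ENNReal.toReal_ofReal (setIntegral_nonneg measurableSet_Iic fun x _ => hf_nn x)]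
  have hμ_int : ∫ t, k t ∂μ = ∫ t, k t * f t := by
    rw [integral_withDensity_eq_integral_toReal_smul₀ hf.1.aemeasurable.ennreal_ofReal
      (ae_of_all _ fun _ => ENNReal.ofReal_lt_top)]
    simp_rw [ENNReal.toReal_ofReal (hf_nn _), smul_eq_mul, mul_comm]
  rw [← hμ_int, integral_eq_neg_integral_measureReal_Iic_mul μ hk hk' hk_top]
  simp_rw [hμ_Iic]

theorem abs_integral_sub_integral_mul_le (F : StieltjesFunction ℝ) {C : ℝ}
    (hF : ∀ t, |F t| ≤ C) (hf_nn : ∀ x, 0 ≤ f x) (hf : Integrable f)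
    (hk : ∀ x, HasDerivAt k (k' x) x) (hk_int : Integrable k) (hk' : Integrable k') {ε : ℝ}
    (hε : ∀ t, |F t - ∫ r in Iic t, f r| ≤ ε) :
    |∫ t, k t ∂F.measure - ∫ t, k t * f t| ≤ ε * ∫ s, |k' s| := by
  have hFk' : Integrable fun s => F s * k' s :=
    hk'.bdd_mul F.mono.measurable.aestronglyMeasurable (ae_of_all _ hF)
  have hF₀k' : Integrable fun s => (∫ r in Iic s, f r) * k' s :=
    hk'.bdd_mul (monotone_setIntegral_Iic hf_nn hf).measurable.aestronglyMeasurable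
      (ae_of_all _ (abs_setIntegral_Iic_le hf_nn hf))
  rw [F.integral_eq_neg_integral_mul_deriv hF hk hk_int hk',
    integral_mul_eq_neg_integral_setIntegral_Iic_mul_s17 hf_nn hf hk hk'
      (tendsto_zero_of_hasDerivAt_of_integrableOn_Ioi (a := 0) (fun x _ => hk x)
        hk'.integrableOn hk_int.integrableOn),
    neg_sub_neg, ← integral_sub hF₀k' hFk', ← integral_const_mul, ← Real.norm_eq_abs]
  refine norm_integral_le_of_norm_le (hk'.abs.const_mul ε) (ae_of_all _ fun s => ?_)
  rw [Real.norm_eq_abs, ← sub_mul, abs_mul, abs_sub_comm]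
  exact mul_le_mul_of_nonneg_right (hε s) (abs_nonneg _)

end IntegrationByParts

noncomputable def bandwidthKernel (K : ℝ → ℝ) (η u t : ℝ) : ℝ := η⁻¹ * K ((u - t) / η)

section BandwidthKernel

variable {K K' : ℝ → ℝ} {η : ℝ}

lemma hasDerivAt_bandwidthKernel (hK : ∀ x, HasDerivAt K (K' x) x) (u t : ℝ) :
    HasDerivAt (bandwidthKernel K η u) (-η⁻¹ * bandwidthKernel K' η u t) t := by
  have h : HasDerivAt (fun t => (u - t) / η) (-η⁻¹) t := by
    simpa [neg_div, div_eq_inv_mul] using ((hasDerivAt_id t).const_sub u).div_const η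
  unfold bandwidthKernel
  exact ((hK _).comp t h |>.const_mul η⁻¹).congr_deriv (by ring)

lemma integrable_bandwidthKernel (hK : Integrable K) (hη : η ≠ 0) (u : ℝ) :
    Integrable (bandwidthKernel K η u) :=
  ((hK.comp_div hη).comp_sub_left u).const_mul η⁻¹

lemma integral_bandwidthKernel_mul (hη : 0 < η) (u : ℝ) (w : ℝ → ℝ) :
    ∫ t, bandwidthKernel K η u t * w t = ∫ x, K x * w (u - η * x) := by
  calc ∫ t, bandwidthKernel K η u t * w t = ∫ y, η⁻¹ * (K (y / η) * w (u - η * (y / η))) := by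
        simpa [bandwidthKernel, mul_div_cancel₀ _ hη.ne', mul_assoc] using
          integral_sub_left_eq_self (fun y => η⁻¹ * (K (y / η) * w (u - y))) volume u
    _ = ∫ x, K x * w (u - η * x) := by
        rw [integral_const_mul, Measure.integral_comp_div (fun x => K x * w (u - η * x)),
          abs_of_pos hη, smul_eq_mul, inv_mul_cancel_left₀ hη.ne']

lemma integral_abs_bandwidthKernel (hη : 0 < η) (u : ℝ) :
    ∫ t, |bandwidthKernel K η u t| = ∫ x, |K x| := by
  simpa [bandwidthKernel, abs_mul, abs_of_pos hη] using
    integral_bandwidthKernel_mul (K := fun x => |K x|) hη u (fun _ => 1)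

theorem abs_integral_bandwidthKernel_sub_le (F : StieltjesFunction ℝ) {C : ℝ}
    (hF : ∀ t, |F t| ≤ C) {f : ℝ → ℝ} (hf_nn : ∀ x, 0 ≤ f x) (hf : Integrable f)
    (hK : ∀ x, HasDerivAt K (K' x) x) (hK_int : Integrable K) (hK' : Integrable K')
    (hη : 0 < η) {ε : ℝ} (hε : ∀ t, |F t - ∫ r in Iic t, f r| ≤ ε) (u : ℝ) :
    |∫ t, bandwidthKernel K η u t ∂F.measure - ∫ x, K x * f (u - η * x)|
      ≤ ε / η * ∫ x, |K' x| := by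
  have h := abs_integral_sub_integral_mul_le F hF hf_nn hf (hasDerivAt_bandwidthKernel hK u)
    (integrable_bandwidthKernel hK_int hη.ne' u)
    ((integrable_bandwidthKernel hK' hη.ne' u).const_mul _) hε
  simp_rw [abs_mul, abs_neg, abs_inv, abs_of_pos hη] at h
  rwa [integral_const_mul, integral_abs_bandwidthKernel hη, integral_bandwidthKernel_mul hη,
    ← mul_assoc, ← div_eq_mul_inv] at h

end BandwidthKernel

section ApproximateIdentity

variable {K f : ℝ → ℝ}

lemma exists_setIntegral_abs_lt_of_integrable (hK : Integrable K) {δ : ℝ} (hδ : 0 < δ) :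
    ∃ R, 0 ≤ R ∧ ∫ x in {x | R < |x|}, |K x| < δ := by
  have hmeas (R : ℝ) : MeasurableSet {x : ℝ | R < |x|} :=
    measurableSet_lt measurable_const measurable_abs
  have hanti : Antitone fun R : ℝ => {x : ℝ | R < |x|} := fun R R' h x hx => h.trans_lt hx
  have hempty : ⋂ R : ℝ, {x : ℝ | R < |x|} = ∅ :=
    eq_empty_of_forall_notMem fun x hx => lt_irrefl |x| (mem_iInter.1 hx |x|)
  have h := tendsto_setIntegral_of_antitone hmeas hanti ⟨0, hK.abs.integrableOn⟩
  rw [hempty, Measure.restrict_empty, integral_zero_measure] at h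
  exact ((h.eventually (gt_mem_nhds hδ)).and (eventually_ge_atTop 0)).exists.imp
    fun R hR => ⟨hR.2, hR.1⟩

lemma abs_integral_mul_comp_sub_sub_le (hK : Integrable K) (hK_one : ∫ x, K x = 1) {M : ℝ}
    (hfM : ∀ x, |f x| ≤ M) (hf : Continuous f) {R δ η u : ℝ} (hδ : 0 ≤ δ)
    (hclose : ∀ x, |x| ≤ R → |f (u - η * x) - f u| ≤ δ) :
    |(∫ x, K x * f (u - η * x)) - f u|
      ≤ δ * (∫ x, |K x|) + 2 * M * ∫ x in {x | R < |x|}, |K x| := by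
  have htail : MeasurableSet {x : ℝ | R < |x|} := measurableSet_lt measurable_const measurable_abs
  have hpt (x : ℝ) : ‖K x * f (u - η * x) - K x * f u‖
      ≤ δ * |K x| + {x | R < |x|}.indicator (fun x => 2 * M * |K x|) x := by
    rw [← mul_sub, Real.norm_eq_abs, abs_mul]
    by_cases hx : x ∈ {x : ℝ | R < |x|}
    · have hdiff : |f (u - η * x) - f u| ≤ 2 * M :=
        (abs_sub _ _).trans (by linarith [hfM (u - η * x), hfM u])
      rw [indicator_of_mem hx]
      nlinarith [abs_nonneg (K x)]
    · rw [indicator_of_notMem hx, add_zero, mul_comm δ]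
      exact mul_le_mul_of_nonneg_left (hclose x (not_lt.1 hx)) (abs_nonneg _)
  have hint : Integrable fun x => K x * f (u - η * x) :=
    hK.mul_bdd (hf.comp (by fun_prop)).aestronglyMeasurable (ae_of_all _ fun x => hfM _)
  have hbound :
      Integrable fun x => δ * |K x| + {x | R < |x|}.indicator (fun x => 2 * M * |K x|) x :=
    (hK.abs.const_mul _).add ((hK.abs.const_mul _).indicator htail)
  rw [← Real.norm_eq_abs]
  calc ‖(∫ x, K x * f (u - η * x)) - f u‖ = ‖∫ x, (K x * f (u - η * x) - K x * f u)‖ := by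
        rw [integral_sub hint (hK.mul_const _), integral_mul_const, hK_one, one_mul]
    _ ≤ δ * (∫ x, |K x|) + 2 * M * ∫ x in {x | R < |x|}, |K x| := by
        refine (norm_integral_le_of_norm_le hbound (ae_of_all _ hpt)).trans_eq ?_
        rw [integral_add (hK.abs.const_mul _) ((hK.abs.const_mul _).indicator htail),
          integral_indicator htail, integral_const_mul, integral_const_mul]

theorem tendstoUniformly_integral_mul_comp_sub_mul (hK : Integrable K) (hK_one : ∫ x, K x = 1)
    {M : ℝ} (hfM : ∀ x, |f x| ≤ M) (hf : UniformContinuous f) :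
    TendstoUniformly (fun η u => ∫ x, K x * f (u - η * x)) f (𝓝 0) := by
  rw [Metric.tendstoUniformly_iff]
  intro δ hδ
  have hM : 0 ≤ M := (abs_nonneg _).trans (hfM 0)
  set A := ∫ x, |K x| with hA_def
  have hA : 0 ≤ A := integral_nonneg fun _ => abs_nonneg _
  obtain ⟨R, hR, hR_tail⟩ :=
    exists_setIntegral_abs_lt_of_integrable hK (δ := δ / (2 * (2 * M + 1))) (by positivity)
  obtain ⟨θ, hθ, hfθ⟩ := Metric.uniformContinuous_iff.1 hf (δ / (2 * (A + 1))) (by positivity)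
  have hη : ∀ᶠ η : ℝ in 𝓝 0, |η| * R < θ := by
    have : Tendsto (fun η : ℝ => |η| * R) (𝓝 0) (𝓝 0) := by
      simpa using (continuous_abs.mul continuous_const).tendsto (0 : ℝ) (f := fun η : ℝ => |η| * R)
    exact this.eventually (gt_mem_nhds hθ)
  filter_upwards [hη] with η hη u
  have hclose (x : ℝ) (hx : |x| ≤ R) : |f (u - η * x) - f u| ≤ δ / (2 * (A + 1)) := by
    refine (hfθ ?_).le
    rw [Real.dist_eq, sub_sub_cancel_left, abs_neg, abs_mul]
    exact lt_of_le_of_lt (by gcongr) hη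
  have hsplit := abs_integral_mul_comp_sub_sub_le hK hK_one hfM hf.continuous (by positivity) hclose
  rw [← hA_def] at hsplit
  have h1 : δ / (2 * (A + 1)) * A ≤ δ / 2 := by
    rw [div_mul_eq_mul_div, div_le_div_iff₀ (by positivity) (by positivity)]; nlinarith
  have h2 : 2 * M * (δ / (2 * (2 * M + 1))) < δ / 2 := by
    rw [mul_div_assoc', div_lt_div_iff₀ (by positivity) (by positivity)]; nlinarith
  rw [dist_comm, Real.dist_eq]
  calc _ ≤ _ := hsplit
    _ ≤ δ / (2 * (A + 1)) * A + 2 * M * (δ / (2 * (2 * M + 1))) := by gcongr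
    _ < δ := by linarith

end ApproximateIdentity

theorem TendstoUniformly.of_dist_le {ι α β : Type*} [PseudoMetricSpace β] {p : Filter ι}
    {F G : ι → α → β} {f : α → β} (hG : TendstoUniformly G f p) {a : ι → ℝ}
    (ha : Tendsto a p (𝓝 0)) (hFG : ∀ᶠ n in p, ∀ x, dist (F n x) (G n x) ≤ a n) :
    TendstoUniformly F f p := by
  rw [Metric.tendstoUniformly_iff] at hG ⊢
  intro δ hδ
  filter_upwards [hG (δ / 2) (half_pos hδ), ha.eventually (gt_mem_nhds (half_pos hδ)), hFG]
    with n hGn han hFGn x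
  calc dist (f x) (F n x) ≤ dist (f x) (G n x) + dist (F n x) (G n x) := dist_triangle_right _ _ _
    _ < δ / 2 + δ / 2 := add_lt_add_of_lt_of_le (hGn x) ((hFGn x).trans han.le)
    _ = δ := add_halves δ

theorem kernel_density_estimate_tendstoUniformly_of_uniformContinuous_general
    (f₀ : ℝ → ℝ) (hf₀nn : ∀ x, 0 ≤ f₀ x)
    (M : ℝ) (hf₀bdd : ∀ x, f₀ x ≤ M)
    (hf₀int : Integrable f₀)
    (F₀ : ℝ → ℝ) (hF₀ : ∀ t, F₀ t = ∫ s in Set.Iic t, f₀ s)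
    (F : ℕ → StieltjesFunction ℝ)
    (hFbdd : ∀ n, ∃ C, ∀ t, |F n t| ≤ C)
    (η : ℕ → ℝ) (hηpos : ∀ n, 0 < η n)
    (hη0 : Tendsto η atTop (𝓝 0))
    (hε : Tendsto (fun n => (⨆ t, |F n t - F₀ t|) / η n) atTop (𝓝 0))
    (φ : ℝ → ℝ) (hφ : ∀ x, φ x = (Real.sqrt (2 * Real.pi))⁻¹ * Real.exp (-x ^ 2 / 2))
    (fn : ℕ → ℝ → ℝ)
    (hfn : ∀ n u, fn n u = ∫ t, (η n)⁻¹ * φ ((u - t) / η n) ∂(F n).measure)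
    (hucont : UniformContinuous f₀) :
    TendstoUniformly (fun n u => fn n u) f₀ atTop := by
  obtain rfl : φ = gaussianPDFReal 0 1 := funext fun x => by simp [hφ, gaussianPDFReal]
  have hφ' (x : ℝ) : HasDerivAt (gaussianPDFReal 0 1) (-x * gaussianPDFReal 0 1 x) x := by
    simpa using hasDerivAt_gaussianPDFReal 0 1 x
  have hφ'_int : Integrable fun x => -x * gaussianPDFReal 0 1 x := by
    simpa using (integrable_sub_mul_gaussianPDFReal 0 1).neg
  have hε_le (n : ℕ) (t : ℝ) : |F n t - ∫ r in Iic t, f₀ r| ≤ ⨆ t, |F n t - F₀ t| := by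
    obtain ⟨C, hC⟩ := hFbdd n
    rw [← hF₀]
    refine le_ciSup (f := fun t => |F n t - F₀ t|) ⟨C + ∫ x, f₀ x, ?_⟩ t
    rintro _ ⟨s, rfl⟩
    exact (abs_sub _ _).trans (add_le_add (hC s) (hF₀ s ▸ abs_setIntegral_Iic_le hf₀nn hf₀int s))
  have hclose (n : ℕ) (u : ℝ) : dist (fn n u) (∫ x, gaussianPDFReal 0 1 x * f₀ (u - η n * x))
      ≤ (⨆ t, |F n t - F₀ t|) / η n * ∫ x, |-x * gaussianPDFReal 0 1 x| := by
    obtain ⟨C, hC⟩ := hFbdd n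
    exact hfn n u ▸ abs_integral_bandwidthKernel_sub_le (F n) hC hf₀nn hf₀int
      hφ' (integrable_gaussianPDFReal 0 1) hφ'_int (hηpos n) (hε_le n) u
  have hf₀_abs (x : ℝ) : |f₀ x| ≤ M := (abs_of_nonneg (hf₀nn x)).trans_le (hf₀bdd x)
  have hsmooth := tendstoUniformly_integral_mul_comp_sub_mul (integrable_gaussianPDFReal 0 1)
    (integral_gaussianPDFReal_eq_one 0 one_ne_zero) hf₀_abs hucont
  exact TendstoUniformly.of_dist_le (fun U hU => hη0.eventually (hsmooth U hU))
    (by simpa using hε.mul_const (∫ x, |-x * gaussianPDFReal 0 1 x|)) (Eventually.of_forall hclose)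

/-- Kernel density estimation: if `F_n → F₀` uniformly at rate `ε_n` with bandwidths
`η_n → 0` and `ε_n/η_n → 0`, and `f₀` is uniformly continuous on `ℝ`, then
`sup_u |f_n(u) − f₀(u)| → 0`. -/
theorem kernel_density_estimate_tendstoUniformly_of_uniformContinuous
    (f₀ : ℝ → ℝ) (hf₀nn : ∀ x, 0 ≤ f₀ x)
    (M : ℝ) (hf₀bdd : ∀ x, f₀ x ≤ M)
    (hf₀int : Integrable f₀) (hf₀prob : ∫ x, f₀ x = 1)
    (F₀ : ℝ → ℝ) (hF₀ : ∀ t, F₀ t = ∫ s in Set.Iic t, f₀ s)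
    (F : ℕ → StieltjesFunction ℝ)
    (hFbdd : ∀ n, ∃ C, ∀ t, |F n t| ≤ C)
    (η : ℕ → ℝ) (hηpos : ∀ n, 0 < η n)
    (hη0 : Tendsto η atTop (𝓝 0))
    (hε : Tendsto (fun n => (⨆ t, |F n t - F₀ t|) / η n) atTop (𝓝 0))
    (φ : ℝ → ℝ) (hφ : ∀ x, φ x = (Real.sqrt (2 * Real.pi))⁻¹ * Real.exp (-x ^ 2 / 2))
    (fn : ℕ → ℝ → ℝ)
    (hfn : ∀ n u, fn n u = ∫ t, (η n)⁻¹ * φ ((u - t) / η n) ∂(F n).measure)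
    (hucont : UniformContinuous f₀) :
    TendstoUniformly (fun n u => fn n u) f₀ atTop :=
  kernel_density_estimate_tendstoUniformly_of_uniformContinuous_general f₀ hf₀nn M hf₀bdd hf₀int F₀
    hF₀ F hFbdd η hηpos hη0 hε φ hφ fn hfn hucont
end
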